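/- arXiv:1507.07677 — 2 statements merged into one kernel-verified Lean document; each statement's English description precedes it below -/
import Mathlib

section
/- Let G be a finite two-player turn-based game on a DAG with no chance nodes. Define capacities γ by: γ(root) = −∞, and for every non-root node s', γ(s') = min over edges (s, s') entering s' of c(s, s'), where c(s, s') = γ(s) if s is a leader node, and c(s, s') = max( γ(s), max_{s'' child of s, s'' ≠ s'} μ(s'') ) if s is a follower node. Then a terminal node z is a possible outcome — i.e., there exist a pure leader strategy π1 and a pure follower best response π2 to π1 whose induced play from the root reaches z — if and only if u2(z) ≥ γ(z). Consequently, the leader's Stackelberg value in pure strategies equals max{ u1(z) : z terminal, u2(z) ≥ γ(z) }. -/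
open scoped BigOperators Classical

noncomputable section

/-- A finite two-player turn-based game on a DAG with no chance nodes: a finite set `V` of
nodes, a children map `succ` (a node is terminal iff it has no children), an owner for each
non-terminal node (`0` = leader, `1` = follower), utilities `u1`, `u2` at the terminal
nodes, a unique source `root` from which every node is reachable, and a rank function
witnessing acyclicity. -/
structure DAGGame (V : Type) [Fintype V] [DecidableEq V] where
  succ : V → Finset V
  owner : V → Fin 2
  u1 : V → ℝ
  u2 : V → ℝ
  root : V
  rank : V → ℕ
  rank_lt : ∀ v w, w ∈ succ v → rank w < rank v
  reachable : ∀ v, Relation.ReflTransGen (fun a b => b ∈ succ a) root v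

namespace DAGGame

variable {V : Type} [Fintype V] [DecidableEq V]

/-- A (memoryless) pure strategy: a choice of a child at every non-terminal node. -/
def Strat (G : DAGGame V) : Type :=
  { π : V → V // ∀ v, (G.succ v).Nonempty → π v ∈ G.succ v }

/-- The terminal node reached from `v` when the leader follows `π1` and the follower
follows `π2`. -/
def play (G : DAGGame V) (π1 π2 : G.Strat) (v : V) : V :=
  if h : (G.succ v).Nonempty then
    G.play π1 π2 (if G.owner v = 0 then π1.1 v else π2.1 v)
  else v
termination_by G.rank v
decreasing_by
  apply G.rank_lt
  split
  · exact π1.2 v h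
  · exact π2.2 v h

/-- `π2` is a best response of the follower to the leader strategy `π1`: it maximizes the
follower's utility against `π1`. -/
def BestResponse (G : DAGGame V) (π1 π2 : G.Strat) : Prop :=
  ∀ π2' : G.Strat, G.u2 (G.play π1 π2' G.root) ≤ G.u2 (G.play π1 π2 G.root)

/-!
The capacity recursion says that `γ t ≤ B` exactly when `t` is reachable from the root along
edges that are safe at level `B`: at a follower node, every child other than the one taken has
minmax value `μ ≤ B`. A best response whose play ends in `z` only uses edges that are safe at
level `u2 z`, for otherwise the follower could deviate there, against the same leader strategy,
and secure more than `u2 z`. Conversely, along a safe path to `z` the leader follows the path and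
punishes everywhere else by moving to a child of least `μ`. Since the leader can keep `μ` from
increasing, a follower who leaves the path at a child `c` gets at most `max (μ c) (u2 z) = u2 z`.
-/

open Relation

instance (G : DAGGame V) : Finite G.Strat := by
  unfold Strat; infer_instance

instance (G : DAGGame V) : Nonempty G.Strat :=
  ⟨⟨fun v => if h : (G.succ v).Nonempty then h.choose else v,
    fun v h => by simpa [h] using h.choose_spec⟩⟩

variable {G : DAGGame V}

def Strat.update (σ : G.Strat) (a b : V) (hb : b ∈ G.succ a) : G.Strat :=
  ⟨Function.update σ.1 a b, fun v hv => by
    rcases eq_or_ne v a with rfl | hva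
    · simpa using hb
    · simpa [hva] using σ.2 v hv⟩

def Strat.piecewise (σ τ : G.Strat) (S : Set V) : G.Strat :=
  ⟨S.piecewise σ.1 τ.1, fun v hv => by
    by_cases hvS : v ∈ S <;> simp [hvS, σ.2 v hv, τ.2 v hv]⟩

@[simp]
theorem Strat.update_val (σ : G.Strat) (a b : V) (hb : b ∈ G.succ a) :
    (σ.update a b hb).1 = Function.update σ.1 a b :=
  rfl

@[simp]
theorem Strat.piecewise_val (σ τ : G.Strat) (S : Set V) :
    (σ.piecewise τ S).1 = S.piecewise σ.1 τ.1 :=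
  rfl

variable (G)

theorem exists_strat_forall_le (f : V → ℝ) :
    ∃ ρ : G.Strat, ∀ v, ∀ c ∈ G.succ v, f (ρ.1 v) ≤ f c := by
  have h : ∀ v, ∃ m, ((G.succ v).Nonempty → m ∈ G.succ v) ∧ ∀ c ∈ G.succ v, f m ≤ f c := by
    intro v
    rcases (G.succ v).eq_empty_or_nonempty with hv | hv
    · exact ⟨v, by simp [hv], by simp [hv]⟩
    · obtain ⟨m, hm, hmin⟩ := (G.succ v).exists_min_image f hv
      exact ⟨m, fun _ => hm, hmin⟩
  choose ρ hρ using h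
  exact ⟨⟨ρ, fun v => (hρ v).1⟩, fun v => (hρ v).2⟩

@[elab_as_elim]
theorem succ_induction {P : V → Prop} (ih : ∀ v, (∀ w ∈ G.succ v, P w) → P v) (v : V) : P v :=
  ih v fun w hw =>
    have := G.rank_lt v w hw
    succ_induction ih w
termination_by G.rank v

theorem rank_le_of_reflTransGen {r : V → V → Prop} (hr : ∀ a b, r a b → b ∈ G.succ a)
    {x y : V} (h : ReflTransGen r x y) : G.rank y ≤ G.rank x := by
  induction h with
  | refl => exact le_rfl
  | tail _ hab ih => exact (G.rank_lt _ _ (hr _ _ hab)).le.trans ih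

theorem rank_le_rank_root (v : V) : G.rank v ≤ G.rank G.root :=
  G.rank_le_of_reflTransGen (fun _ _ h => h) (G.reachable v)

def next (π1 π2 : G.Strat) (v : V) : V :=
  if G.owner v = 0 then π1.1 v else π2.1 v

def Step (π1 π2 : G.Strat) (a b : V) : Prop :=
  b ∈ G.succ a ∧ G.next π1 π2 a = b

variable {G} {π1 π2 π1' π2' : G.Strat}

theorem next_mem {v : V} (h : (G.succ v).Nonempty) : G.next π1 π2 v ∈ G.succ v := by
  unfold next
  split_ifs
  exacts [π1.2 v h, π2.2 v h]

theorem play_eq_play_next {v : V} (h : (G.succ v).Nonempty) :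
    G.play π1 π2 v = G.play π1 π2 (G.next π1 π2 v) := by
  rw [play, dif_pos h]
  rfl

theorem play_eq_self {v : V} (h : G.succ v = ∅) : G.play π1 π2 v = v := by
  rw [play, dif_neg (by simp [h])]

theorem play_eq_of_reflTransGen {x y : V} (h : ReflTransGen (G.Step π1 π2) x y) :
    G.play π1 π2 x = G.play π1 π2 y := by
  induction h with
  | refl => rfl
  | tail _ hab ih => rw [ih, play_eq_play_next ⟨_, hab.1⟩, hab.2]

theorem reflTransGen_step_play (v : V) : ReflTransGen (G.Step π1 π2) v (G.play π1 π2 v) := by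
  induction v using G.succ_induction with
  | ih v ih =>
    rcases (G.succ v).eq_empty_or_nonempty with h | h
    · rw [play_eq_self h]
    · rw [play_eq_play_next h]
      exact .head ⟨next_mem h, rfl⟩ (ih _ (next_mem h))

theorem succ_play_eq_empty (v : V) : G.succ (G.play π1 π2 v) = ∅ := by
  induction v using G.succ_induction with
  | ih v ih =>
    rcases (G.succ v).eq_empty_or_nonempty with h | h
    · rwa [play_eq_self h]
    · rw [play_eq_play_next h]
      exact ih _ (next_mem h)

theorem reflTransGen_step_congr {x y : V} (h : ReflTransGen (G.Step π1 π2) x y)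
    (hagree : ∀ u, G.rank y < G.rank u → G.rank u ≤ G.rank x →
      G.next π1' π2' u = G.next π1 π2 u) :
    ReflTransGen (G.Step π1' π2') x y := by
  induction h with
  | refl => rfl
  | @tail a b hxa hab ih =>
    have hba : G.rank b < G.rank a := G.rank_lt _ _ hab.1
    have hax : G.rank a ≤ G.rank x := G.rank_le_of_reflTransGen (fun _ _ h => h.1) hxa
    refine (ih fun u hu hux => hagree u (hba.trans hu) hux).tail ⟨hab.1, ?_⟩
    rw [hagree a hba hax, hab.2]

theorem play_congr {v : V}
    (hagree : ∀ u, G.rank u ≤ G.rank v → G.next π1' π2' u = G.next π1 π2 u) :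
    G.play π1' π2' v = G.play π1 π2 v := by
  have h := reflTransGen_step_congr (reflTransGen_step_play (π1 := π1) (π2 := π2) v)
    fun u _ hu => hagree u hu
  rw [play_eq_of_reflTransGen h, play_eq_self (succ_play_eq_empty v)]

/-- The cost `c(s, t)` of the edge `s → t` in the capacity recursion. -/
def edgeCap (G : DAGGame V) (μ : V → ℝ) (γ : V → EReal) (s t : V) : EReal :=
  if G.owner s = 0 then γ s
  else max (γ s) (sSup {x : EReal | ∃ s'' ∈ G.succ s, s'' ≠ t ∧ x = ((μ s'' : ℝ) : EReal)})

def SafeEdge (G : DAGGame V) (μ : V → ℝ) (B : ℝ) (s t : V) : Prop :=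
  t ∈ G.succ s ∧ (G.owner s ≠ 0 → ∀ c ∈ G.succ s, c ≠ t → μ c ≤ B)

section Capacity

variable {μ : V → ℝ} {γ : V → EReal}

theorem edgeCap_le_iff {s t : V} (ht : t ∈ G.succ s) (B : ℝ) :
    G.edgeCap μ γ s t ≤ B ↔ γ s ≤ B ∧ G.SafeEdge μ B s t := by
  unfold edgeCap SafeEdge
  split_ifs with hlead
  · simp [hlead, ht]
  · have hsup : sSup {x : EReal | ∃ s'' ∈ G.succ s, s'' ≠ t ∧ x = ((μ s'' : ℝ) : EReal)} ≤ B ↔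
        ∀ c ∈ G.succ s, c ≠ t → μ c ≤ B := by
      simp only [sSup_le_iff, Set.mem_ofPred_eq]
      exact ⟨fun h c hc hct => EReal.coe_le_coe_iff.1 (h _ ⟨c, hc, hct, rfl⟩),
        fun h _ ⟨c, hc, hct, hx⟩ => hx ▸ EReal.coe_le_coe_iff.2 (h c hc hct)⟩
    simp [hlead, ht, hsup]

variable (hγroot : γ G.root = ⊥)
  (hγ : ∀ t, t ≠ G.root → γ t = sInf {c | ∃ s, t ∈ G.succ s ∧ c = G.edgeCap μ γ s t})

include hγ in
theorem exists_edgeCap_eq {t : V} (ht : t ≠ G.root) :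
    ∃ s, t ∈ G.succ s ∧ γ t = G.edgeCap μ γ s t := by
  have hne : {c | ∃ s, t ∈ G.succ s ∧ c = G.edgeCap μ γ s t}.Nonempty := by
    rcases (G.reachable t).cases_tail with rfl | ⟨s, -, hs⟩
    · exact absurd rfl ht
    · exact ⟨_, s, hs, rfl⟩
  have hfin : {c | ∃ s, t ∈ G.succ s ∧ c = G.edgeCap μ γ s t}.Finite :=
    (Set.finite_range fun s => G.edgeCap μ γ s t).subset fun _ ⟨s, _, hc⟩ => ⟨s, hc.symm⟩
  rw [hγ t ht]
  exact hne.csInf_mem hfin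

include hγ in
theorem reflTransGen_safeEdge_of_capacity_le {B : ℝ} {t : V} (h : γ t ≤ B) :
    ReflTransGen (G.SafeEdge μ B) G.root t := by
  by_cases ht : t = G.root
  · exact ht ▸ .refl
  obtain ⟨s, hs, hcap⟩ := exists_edgeCap_eq hγ ht
  obtain ⟨hγs, hsafe⟩ := (edgeCap_le_iff hs B).1 (hcap ▸ h)
  have := G.rank_lt s t hs
  have := G.rank_le_rank_root s
  exact (reflTransGen_safeEdge_of_capacity_le hγs).tail hsafe
termination_by G.rank G.root - G.rank t

include hγroot hγ in
theorem capacity_le_of_reflTransGen_safeEdge {B : ℝ} {t : V}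
    (h : ReflTransGen (G.SafeEdge μ B) G.root t) : γ t ≤ B := by
  induction h with
  | refl => simp [hγroot]
  | @tail a b _ hab ih =>
    have hb : b ≠ G.root := by
      rintro rfl
      exact absurd (G.rank_lt _ _ hab.1) (not_lt.2 (G.rank_le_rank_root a))
    rw [hγ b hb]
    exact sInf_le_of_le ⟨a, hab.1, rfl⟩ ((edgeCap_le_iff hab.1 B).2 ⟨ih, hab⟩)

include hγroot hγ in
theorem capacity_le_iff (B : ℝ) (t : V) :
    γ t ≤ B ↔ ReflTransGen (G.SafeEdge μ B) G.root t :=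
  ⟨reflTransGen_safeEdge_of_capacity_le hγ, capacity_le_of_reflTransGen_safeEdge hγroot hγ⟩

end Capacity

def IsPossibleOutcome (G : DAGGame V) (z : V) : Prop :=
  ∃ π1 π2 : G.Strat, G.BestResponse π1 π2 ∧ G.play π1 π2 G.root = z

theorem exists_strat_of_reflTransGen {r : V → V → Prop} (hr : ∀ a b, r a b → b ∈ G.succ a)
    {s t : V} (h : ReflTransGen r s t) :
    ∃ (τ : G.Strat) (P : Set V), s ∈ P ∧ t ∈ P ∧ ∀ u ∈ P, u ≠ t → τ.1 u ∈ P ∧ r u (τ.1 u) := by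
  induction h with
  | refl => exact ⟨Classical.arbitrary _, {s}, rfl, rfl, fun u hu hus => absurd hu hus⟩
  | @tail a b _ hab ih =>
    obtain ⟨τ, P, hs, -, hP⟩ := ih
    refine ⟨τ.update a b (hr a b hab), insert b P, .inr hs, .inl rfl, fun u hu hub => ?_⟩
    rcases eq_or_ne u a with rfl | hua
    · rw [Strat.update_val, Function.update_self]
      exact ⟨.inl rfl, hab⟩
    · rw [Strat.update_val, Function.update_of_ne hua]
      obtain ⟨hτu, hru⟩ := hP u (hu.resolve_left hub) hua
      exact ⟨.inr hτu, hru⟩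

theorem play_eq_of_forall_mem {P : Set V} {z : V} (hz : G.succ z = ∅)
    (hP : ∀ u ∈ P, u ≠ z → (G.succ u).Nonempty ∧ G.next π1 π2 u ∈ P) {v : V} (hv : v ∈ P) :
    G.play π1 π2 v = z := by
  induction v using G.succ_induction with
  | ih v ih =>
    rcases eq_or_ne v z with rfl | hvz
    · exact play_eq_self hz
    · obtain ⟨hne, hnext⟩ := hP v hv hvz
      rw [play_eq_play_next hne]
      exact ih _ (next_mem hne) hnext

section MinmaxValue

variable {μ : V → ℝ}
  (hμ : ∀ v, μ v =
    sInf {x : ℝ | ∃ π1 : G.Strat,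
      x = sSup {y : ℝ | ∃ π2 : G.Strat, y = G.u2 (G.play π1 π2 v)}})
include hμ

theorem mu_eq_iInf_iSup (v : V) :
    μ v = ⨅ π1 : G.Strat, ⨆ π2 : G.Strat, G.u2 (G.play π1 π2 v) := by
  simp only [hμ v, iInf, iSup, Set.range, eq_comm]

theorem exists_strat_forall_u2_play_le_mu (v : V) :
    ∃ π1 : G.Strat, ∀ π2, G.u2 (G.play π1 π2 v) ≤ μ v := by
  obtain ⟨π1, hπ1⟩ : ∃ π1 : G.Strat, ⨆ π2, G.u2 (G.play π1 π2 v) =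
      ⨅ π1 : G.Strat, ⨆ π2 : G.Strat, G.u2 (G.play π1 π2 v) :=
    exists_eq_ciInf_of_finite
  refine ⟨π1, fun π2 => ?_⟩
  rw [mu_eq_iInf_iSup hμ, ← hπ1]
  exact le_ciSup (Finite.bddAbove_range fun π2 => G.u2 (G.play π1 π2 v)) π2

theorem mu_le_of_forall_u2_play_le {v : V} {B : ℝ} (π1 : G.Strat)
    (h : ∀ π2, G.u2 (G.play π1 π2 v) ≤ B) : μ v ≤ B := by
  rw [mu_eq_iInf_iSup hμ]
  exact (ciInf_le (Finite.bddBelow_range fun π1 : G.Strat => ⨆ π2, G.u2 (G.play π1 π2 v)) π1).trans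
    (ciSup_le h)

theorem u2_le_mu_of_succ_eq_empty {v : V} (h : G.succ v = ∅) : G.u2 v ≤ μ v := by
  obtain ⟨π1, hπ1⟩ := exists_strat_forall_u2_play_le_mu hμ v
  simpa [play_eq_self h] using hπ1 π1

theorem exists_mem_succ_mu_le {v : V} (h : (G.succ v).Nonempty) (hlead : G.owner v = 0) :
    ∃ w ∈ G.succ v, μ w ≤ μ v := by
  obtain ⟨π1, hπ1⟩ := exists_strat_forall_u2_play_le_mu hμ v
  refine ⟨π1.1 v, π1.2 v h, mu_le_of_forall_u2_play_le hμ π1 fun π2 => ?_⟩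
  simpa [play_eq_play_next h, next, hlead] using hπ1 π2

theorem mu_le_of_mem_succ {v w : V} (hfol : G.owner v ≠ 0) (hw : w ∈ G.succ v) :
    μ w ≤ μ v := by
  obtain ⟨π1, hπ1⟩ := exists_strat_forall_u2_play_le_mu hμ v
  refine mu_le_of_forall_u2_play_le hμ π1 fun σ => ?_
  have hwv : G.rank w < G.rank v := G.rank_lt v w hw
  have hplay : G.play π1 (σ.update v w hw) v = G.play π1 σ w := by
    rw [play_eq_play_next ⟨w, hw⟩]
    simp only [next, hfol, if_false, Strat.update_val, Function.update_self]
    refine play_congr fun u hu => ?_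
    have huv : u ≠ v := by rintro rfl; omega
    simp [next, huv]
  exact hplay ▸ hπ1 _

theorem exists_strat_mu_next_le :
    ∃ ρ : G.Strat, ∀ π2 v, (G.succ v).Nonempty → μ (G.next ρ π2 v) ≤ μ v := by
  obtain ⟨ρ, hρ⟩ := G.exists_strat_forall_le μ
  refine ⟨ρ, fun π2 v h => ?_⟩
  by_cases hlead : G.owner v = 0
  · obtain ⟨w, hw, hwv⟩ := exists_mem_succ_mu_le hμ h hlead
    simpa [next, hlead] using (hρ v w hw).trans hwv
  · simpa [next, hlead] using mu_le_of_mem_succ hμ hlead (π2.2 v h)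

theorem safeEdge_next_of_bestResponse (hbr : G.BestResponse π1 π2) {a : V}
    (ha : ReflTransGen (G.Step π1 π2) G.root a) (hne : (G.succ a).Nonempty) :
    G.SafeEdge μ (G.u2 (G.play π1 π2 G.root)) a (G.next π1 π2 a) := by
  refine ⟨next_mem hne, fun hfol c hc _ => mu_le_of_forall_u2_play_le hμ π1 fun σ => ?_⟩
  set π2' := σ.piecewise (π2.update a c hc) {u | G.rank u < G.rank a}
  have hroot : G.play π1 π2' G.root = G.play π1 π2' a := by
    refine play_eq_of_reflTransGen (reflTransGen_step_congr ha fun u hu _ => ?_)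
    have hua : u ≠ a := by rintro rfl; omega
    have hau : ¬G.rank u < G.rank a := by omega
    simp [π2', next, hau, hua]
  have hdev : G.play π1 π2' a = G.play π1 σ c := by
    have hnext : G.next π1 π2' a = c := by simp [π2', next, hfol]
    rw [play_eq_play_next hne, hnext]
    refine play_congr fun u hu => ?_
    have : G.rank u < G.rank a := hu.trans_lt (G.rank_lt _ _ hc)
    simp [π2', next, this]
  calc G.u2 (G.play π1 σ c) = G.u2 (G.play π1 π2' G.root) := by rw [hroot, hdev]
    _ ≤ _ := hbr π2'

theorem reflTransGen_safeEdge_of_bestResponse (hbr : G.BestResponse π1 π2) {t : V}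
    (ht : ReflTransGen (G.Step π1 π2) G.root t) :
    ReflTransGen (G.SafeEdge μ (G.u2 (G.play π1 π2 G.root))) G.root t := by
  induction ht with
  | refl => rfl
  | @tail a b hra hab ih =>
    exact ih.tail (hab.2 ▸ safeEdge_next_of_bestResponse hμ hbr hra ⟨b, hab.1⟩)

theorem u2_play_piecewise_le {τ ρ : G.Strat} {P : Set V} {z : V} (hz : G.succ z = ∅)
    (hP : ∀ u ∈ P, u ≠ z → τ.1 u ∈ P ∧ G.SafeEdge μ (G.u2 z) u (τ.1 u))
    (hρ : ∀ π2 v, (G.succ v).Nonempty → μ (G.next ρ π2 v) ≤ μ v) (π2 : G.Strat) (v : V) :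
    G.u2 (G.play (τ.piecewise ρ (P \ {z})) π2 v) ≤
      if v ∈ P then G.u2 z else max (μ v) (G.u2 z) := by
  induction v using G.succ_induction with
  | ih v ih =>
  set π1 := τ.piecewise ρ (P \ {z})
  rcases (G.succ v).eq_empty_or_nonempty with hv | hv
  · rw [play_eq_self hv]
    split_ifs with hvP
    · obtain rfl : v = z := by
        by_contra hvz
        simpa [hv] using (hP v hvP hvz).2.1
      exact le_rfl
    · exact le_max_of_le_left (u2_le_mu_of_succ_eq_empty hμ hv)
  set w := G.next π1 π2 v
  have hbound : G.u2 (G.play π1 π2 v) ≤ if w ∈ P then G.u2 z else max (μ w) (G.u2 z) := by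
    rw [play_eq_play_next hv]
    exact ih w (next_mem hv)
  split_ifs at hbound ⊢ with hvP hwP hwP
  · exact hbound
  · have hvz : v ≠ z := by rintro rfl; simp [hz] at hv
    obtain ⟨hτP, -, hsafe⟩ := hP v hvP hvz
    have hfol : G.owner v ≠ 0 := fun hlead => hwP (by simpa [w, next, π1, hlead, hvP, hvz])
    have hwτ : w ≠ τ.1 v := fun h => hwP (h ▸ hτP)
    exact hbound.trans (max_le (hsafe hfol w (next_mem hv) hwτ) le_rfl)
  · exact hbound.trans (le_max_right _ _)
  · have hwρ : w = G.next ρ π2 v := by simp [w, next, π1, hvP]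
    exact hbound.trans (max_le_max_right _ (hwρ ▸ hρ π2 v hv))

theorem isPossibleOutcome_of_reflTransGen_safeEdge {z : V} (hz : G.succ z = ∅)
    (h : ReflTransGen (G.SafeEdge μ (G.u2 z)) G.root z) : G.IsPossibleOutcome z := by
  obtain ⟨τ, P, hroot, -, hP⟩ := G.exists_strat_of_reflTransGen (fun _ _ h => h.1) h
  obtain ⟨ρ, hρ⟩ := exists_strat_mu_next_le hμ
  set π1 := τ.piecewise ρ (P \ {z})
  have hplay : G.play π1 τ G.root = z := by
    refine play_eq_of_forall_mem hz (fun u hu huz => ⟨⟨_, (hP u hu huz).2.1⟩, ?_⟩) hroot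
    have : π1.1 u = τ.1 u := by simp [π1, hu, huz]
    simpa [next, this] using (hP u hu huz).1
  refine ⟨π1, τ, fun π2 => ?_, hplay⟩
  rw [hplay]
  simpa [hroot] using u2_play_piecewise_le hμ hz hP hρ π2 G.root

theorem isPossibleOutcome_iff {z : V} (hz : G.succ z = ∅) :
    G.IsPossibleOutcome z ↔ ReflTransGen (G.SafeEdge μ (G.u2 z)) G.root z := by
  refine ⟨?_, isPossibleOutcome_of_reflTransGen_safeEdge hμ hz⟩
  rintro ⟨π1, π2, hbr, rfl⟩
  exact reflTransGen_safeEdge_of_bestResponse hμ hbr (reflTransGen_step_play _)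

end MinmaxValue

/-- Let `μ` be the follower's minmax value of the sub-DAG of each node
(the follower's value of the zero-sum game in which the leader minimizes the follower's
utility and the follower best responds) and let the capacities `γ` satisfy
`γ(root) = −∞` and, for every non-root node `s'`,
`γ(s') = min over edges (s, s') of c(s, s')`, where `c(s, s') = γ(s)` if `s` is a leader
node and `c(s, s') = max(γ(s), max_{s'' child of s, s'' ≠ s'} μ(s''))` if `s` is a
follower node.  Then a terminal node `z` is a possible outcome — reachable from the root
under some pure leader strategy together with a pure follower best response to it — iff
`u2(z) ≥ γ(z)`; consequently the leader's Stackelberg value in pure strategies (with ties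
among follower best responses broken in favor of the leader) equals
`max { u1(z) : z terminal, u2(z) ≥ γ(z) }`. -/
theorem possible_outcome_iff_capacity (G : DAGGame V) (μ : V → ℝ)
    (hμ : ∀ v, μ v =
      sInf {x : ℝ | ∃ π1 : G.Strat,
        x = sSup {y : ℝ | ∃ π2 : G.Strat, y = G.u2 (G.play π1 π2 v)}})
    (γ : V → EReal)
    (hγroot : γ G.root = ⊥)
    (hγ : ∀ s' : V, s' ≠ G.root → γ s' =
      sInf {c : EReal | ∃ s : V, s' ∈ G.succ s ∧ c =
        if G.owner s = 0 then γ s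
        else max (γ s)
          (sSup {x : EReal | ∃ s'' ∈ G.succ s, s'' ≠ s' ∧ x = ((μ s'' : ℝ) : EReal)})}) :
    (∀ z : V, G.succ z = ∅ →
      ((∃ π1 π2 : G.Strat, G.BestResponse π1 π2 ∧ G.play π1 π2 G.root = z) ↔
        γ z ≤ ((G.u2 z : ℝ) : EReal))) ∧
    (∀ x : ℝ,
      IsGreatest {y : ℝ | ∃ π1 π2 : G.Strat,
        G.BestResponse π1 π2 ∧ y = G.u1 (G.play π1 π2 G.root)} x ↔
      IsGreatest {y : ℝ | ∃ z : V, G.succ z = ∅ ∧ γ z ≤ ((G.u2 z : ℝ) : EReal) ∧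
        y = G.u1 z} x) := by
  have hout : ∀ z : V, G.succ z = ∅ →
      (G.IsPossibleOutcome z ↔ γ z ≤ ((G.u2 z : ℝ) : EReal)) := fun z hz =>
    (isPossibleOutcome_iff hμ hz).trans (capacity_le_iff hγroot hγ _ z).symm
  have hvalues : {y : ℝ | ∃ π1 π2 : G.Strat,
        G.BestResponse π1 π2 ∧ y = G.u1 (G.play π1 π2 G.root)} =
      {y : ℝ | ∃ z : V, G.succ z = ∅ ∧ γ z ≤ ((G.u2 z : ℝ) : EReal) ∧ y = G.u1 z} := by
    ext y
    constructor
    · rintro ⟨π1, π2, hbr, rfl⟩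
      have hz := succ_play_eq_empty (π1 := π1) (π2 := π2) G.root
      exact ⟨_, hz, (hout _ hz).1 ⟨π1, π2, hbr, rfl⟩, rfl⟩
    · rintro ⟨z, hz, hcap, rfl⟩
      obtain ⟨π1, π2, hbr, rfl⟩ := (hout z hz).2 hcap
      exact ⟨π1, π2, hbr, rfl⟩
  exact ⟨hout, fun x => by rw [hvalues]⟩

end DAGGame
end
end

section
/- Let G be a finite two-player turn-based game tree with no chance nodes, and define the sets H_s recursively as follows: for a leaf z, H_z = {(u2(z), u1(z))}; for a leader node s, H_s = Conv(∪_{w child of s} H_w); for a follower node s, H_s = Conv(∪_{w child of s} Ĥ_w), where Ĥ_w = H_w ∩ { (x,y) : x ≥ max_{w' child of s, w' ≠ w} min_{(x',y') ∈ H_{w'}} x' }. Then for every node s, H_s equals the set of pairs (follower expected utility, leader expected utility) achievable by incentive-compatible correlated commitments in the subgame rooted at s. -/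
open scoped BigOperators Classical

noncomputable section

/-- A finite two-player turn-based game tree, with a constructor for chance nodes:
every internal node belongs to the leader (player 1), to the follower (player 2), or is a
chance node equipped with a probability distribution over its children, and every leaf
carries real utilities `(u1, u2)` of the leader and the follower. -/
inductive TBT : Type
  | leaf (u1 u2 : ℝ) : TBT
  | leader (n : ℕ) (ch : Fin (n + 1) → TBT) : TBT
  | follower (n : ℕ) (ch : Fin (n + 1) → TBT) : TBT
  | chance (n : ℕ) (p : Fin (n + 1) → ℝ) (ch : Fin (n + 1) → TBT) : TBT

namespace TBT

/-- The game tree has no chance nodes. -/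
def NoChance : TBT → Prop
  | .leaf _ _ => True
  | .leader _ ch => ∀ i, NoChance (ch i)
  | .follower _ ch => ∀ i, NoChance (ch i)
  | .chance _ _ _ => False

/-- The chance probabilities form probability distributions. -/
def ValidChance : TBT → Prop
  | .leaf _ _ => True
  | .leader _ ch => ∀ i, ValidChance (ch i)
  | .follower _ ch => ∀ i, ValidChance (ch i)
  | .chance _ p ch => (∀ i, 0 ≤ p i) ∧ (∑ i, p i) = 1 ∧ ∀ i, ValidChance (ch i)

/-- Pure strategies of the leader: a choice of child at every leader node. -/
def LS : TBT → Type
  | .leaf _ _ => PUnit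
  | .leader n ch => Fin (n + 1) × ((i : Fin (n + 1)) → LS (ch i))
  | .follower n ch => (i : Fin (n + 1)) → LS (ch i)
  | .chance n _ ch => (i : Fin (n + 1)) → LS (ch i)

/-- Pure strategies of the follower: a choice of child at every follower node. -/
def FS : TBT → Type
  | .leaf _ _ => PUnit
  | .leader n ch => (i : Fin (n + 1)) → FS (ch i)
  | .follower n ch => Fin (n + 1) × ((i : Fin (n + 1)) → FS (ch i))
  | .chance n _ ch => (i : Fin (n + 1)) → FS (ch i)

instance fintypeLS : (t : TBT) → Fintype (LS t)
  | .leaf _ _ => inferInstanceAs (Fintype PUnit)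
  | .leader n ch =>
    haveI : ∀ i, Fintype (LS (ch i)) := fun i => fintypeLS (ch i)
    inferInstanceAs (Fintype (Fin (n + 1) × ((i : Fin (n + 1)) → LS (ch i))))
  | .follower n ch =>
    haveI : ∀ i, Fintype (LS (ch i)) := fun i => fintypeLS (ch i)
    inferInstanceAs (Fintype ((i : Fin (n + 1)) → LS (ch i)))
  | .chance n _ ch =>
    haveI : ∀ i, Fintype (LS (ch i)) := fun i => fintypeLS (ch i)
    inferInstanceAs (Fintype ((i : Fin (n + 1)) → LS (ch i)))

instance fintypeFS : (t : TBT) → Fintype (FS t)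
  | .leaf _ _ => inferInstanceAs (Fintype PUnit)
  | .leader n ch =>
    haveI : ∀ i, Fintype (FS (ch i)) := fun i => fintypeFS (ch i)
    inferInstanceAs (Fintype ((i : Fin (n + 1)) → FS (ch i)))
  | .follower n ch =>
    haveI : ∀ i, Fintype (FS (ch i)) := fun i => fintypeFS (ch i)
    inferInstanceAs (Fintype (Fin (n + 1) × ((i : Fin (n + 1)) → FS (ch i))))
  | .chance n _ ch =>
    haveI : ∀ i, Fintype (FS (ch i)) := fun i => fintypeFS (ch i)
    inferInstanceAs (Fintype ((i : Fin (n + 1)) → FS (ch i)))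

/-- The expected utilities `(u1, u2)` obtained when the players follow a pure strategy
profile (the expectation is over the chance moves). -/
def playU : (t : TBT) → LS t → FS t → ℝ × ℝ
  | .leaf u1 u2, _, _ => (u1, u2)
  | .leader _ ch, π1, π2 => playU (ch π1.1) (π1.2 π1.1) (π2 π1.1)
  | .follower _ ch, π1, π2 => playU (ch π2.1) (π1 π2.1) (π2.2 π2.1)
  | .chance _ p ch, π1, π2 => ∑ i, p i • playU (ch i) (π1 i) (π2 i)

/-- `φ` is a probability distribution on pure strategy profiles. -/
def IsDist (t : TBT) (φ : LS t → FS t → ℝ) : Prop :=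
  (∀ π1 π2, 0 ≤ φ π1 π2) ∧ (∑ π1 : LS t, ∑ π2 : FS t, φ π1 π2) = 1

/-- Expected utilities `(u1, u2)` of a (correlated) distribution on pure strategy
profiles. -/
def EU (t : TBT) (φ : LS t → FS t → ℝ) : ℝ × ℝ :=
  ∑ π1 : LS t, ∑ π2 : FS t, φ π1 π2 • playU t π1 π2

/-- Incentive compatibility of a correlated commitment, stated recursively for the
(unnormalized) conditional weight on pure strategy profiles of each subgame:  at every
follower node and for every recommendation `b` there — the action prescribed at that node
by the drawn follower strategy, conditioned on the play (i.e. the recommendations followed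
so far, together with the leader's and chance's moves) having reached that node — the
follower cannot strictly increase his conditional expected utility, computed with respect
to the posterior on the leader's drawn strategy, by deviating to any action `b'` and
playing an arbitrary pure strategy `τ'` thereafter, the leader continuing to play her drawn
strategy. -/
def IC : (t : TBT) → (LS t → FS t → ℝ) → Prop
  | .leaf _ _, _ => True
  | .leader n ch, φ => ∀ i : Fin (n + 1), IC (ch i) (fun σ τ =>
      ∑ π1 : LS (.leader n ch), ∑ π2 : FS (.leader n ch),
        if π1.1 = i ∧ π1.2 i = σ ∧ π2 i = τ then φ π1 π2 else 0)
  | .follower n ch, φ =>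
      (∀ b b' : Fin (n + 1), ∀ τ' : FS (ch b'),
        (∑ π1 : LS (.follower n ch), ∑ π2 : FS (.follower n ch),
          if π2.1 = b then φ π1 π2 * (playU (ch b') (π1 b') τ').2 else 0) ≤
        (∑ π1 : LS (.follower n ch), ∑ π2 : FS (.follower n ch),
          if π2.1 = b then φ π1 π2 * (playU (ch b) (π1 b) (π2.2 b)).2 else 0)) ∧
      ∀ b : Fin (n + 1), IC (ch b) (fun σ τ =>
        ∑ π1 : LS (.follower n ch), ∑ π2 : FS (.follower n ch),
          if π2.1 = b ∧ π1 b = σ ∧ π2.2 b = τ then φ π1 π2 else 0)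
  | .chance n p ch, φ => ∀ i : Fin (n + 1), IC (ch i) (fun σ τ =>
      ∑ π1 : LS (.chance n p ch), ∑ π2 : FS (.chance n p ch),
        if π1 i = σ ∧ π2 i = τ then φ π1 π2 else 0)

/-- The set of pairs (follower expected utility, leader expected utility) achievable by
incentive-compatible correlated commitments in the game `t`. -/
def AchievableSet (t : TBT) : Set (ℝ × ℝ) :=
  {p | ∃ φ : LS t → FS t → ℝ, IsDist t φ ∧ IC t φ ∧ p = ((EU t φ).2, (EU t φ).1)}

/-- The set of leader expected utilities of incentive-compatible correlated commitments;
its greatest element is the leader's SEFCE value. -/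
def SEFCEvals (t : TBT) : Set ℝ :=
  {y | ∃ φ : LS t → FS t → ℝ, IsDist t φ ∧ IC t φ ∧ y = (EU t φ).1}

/-- The recursively defined sets `H_s` of utility pairs `(x, y)`, `x` the follower's and
`y` the leader's utility: a single point at a leaf; at a leader node the convex hull of the
children's sets; at a follower node the convex hull of the union of the restricted sets
`Ĥ_w = H_w ∩ {(x,y) : x ≥ max_{w'≠w} min_{p'∈H_{w'}} p'.1}`; and at a chance node the
weighted Minkowski sum of the children's sets. -/
def Hset : TBT → Set (ℝ × ℝ)
  | .leaf u1 u2 => {(u2, u1)}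
  | .leader _ ch => convexHull ℝ (⋃ i, Hset (ch i))
  | .follower _ ch => convexHull ℝ
      (⋃ i, {p ∈ Hset (ch i) | ∀ j, j ≠ i → sInf (Prod.fst '' Hset (ch j)) ≤ p.1})
  | .chance n p ch =>
      {q | ∃ f : Fin (n + 1) → ℝ × ℝ, (∀ i, f i ∈ Hset (ch i)) ∧ q = ∑ i, p i • f i}


/-! ### Auxiliary machinery -/

section Helpers
variable {α₁ α₂ β β₁ β₂ : Type*} [Fintype α₁] [Fintype α₂] [Fintype β] [Fintype β₁] [Fintype β₂]

lemma fiber1 (S : α₁ → α₂ → ℝ) (g : α₁ → α₂ → β) (D : β → ℝ) :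
    ∑ y : β, (∑ a₁, ∑ a₂, if g a₁ a₂ = y then S a₁ a₂ else 0) * D y
      = ∑ a₁, ∑ a₂, S a₁ a₂ * D (g a₁ a₂) := by
  simp_rw [Finset.sum_mul, ite_mul, zero_mul]
  rw [Finset.sum_comm]
  refine Finset.sum_congr rfl fun a₁ _ => ?_
  rw [Finset.sum_comm]
  refine Finset.sum_congr rfl fun a₂ _ => ?_
  simp

lemma fiber2 (S : α₁ → α₂ → ℝ) (g₁ : α₁ → α₂ → β₁) (g₂ : α₁ → α₂ → β₂) (D : β₁ → β₂ → ℝ) :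
    ∑ y₁ : β₁, ∑ y₂ : β₂,
      (∑ a₁, ∑ a₂, if g₁ a₁ a₂ = y₁ ∧ g₂ a₁ a₂ = y₂ then S a₁ a₂ else 0) * D y₁ y₂
      = ∑ a₁, ∑ a₂, S a₁ a₂ * D (g₁ a₁ a₂) (g₂ a₁ a₂) := by
  have h := fiber1 S (fun a₁ a₂ => (g₁ a₁ a₂, g₂ a₁ a₂)) (fun y => D y.1 y.2)
  rw [Fintype.sum_prod_type] at h
  simp only [Prod.mk.injEq] at h
  exact h

lemma fiber1_weighted (S : α₁ → α₂ → ℝ) (P : α₁ → α₂ → Prop) [∀ a₁ a₂, Decidable (P a₁ a₂)]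
    (g : α₁ → α₂ → β) (D : β → ℝ) :
    ∑ y : β, (∑ a₁, ∑ a₂, if P a₁ a₂ ∧ g a₁ a₂ = y then S a₁ a₂ else 0) * D y
      = ∑ a₁, ∑ a₂, (if P a₁ a₂ then S a₁ a₂ * D (g a₁ a₂) else 0) := by
  have h := fiber1 (fun a₁ a₂ => if P a₁ a₂ then S a₁ a₂ else 0) g D
  simp only [ite_mul, zero_mul] at h
  rw [← h]
  refine Finset.sum_congr rfl fun y _ => ?_
  congr 1
  refine Finset.sum_congr rfl fun a₁ _ => Finset.sum_congr rfl fun a₂ _ => ?_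
  by_cases h1 : P a₁ a₂ <;> by_cases h2 : g a₁ a₂ = y <;> simp [h1, h2]

lemma fiber2_weighted (S : α₁ → α₂ → ℝ) (P : α₁ → α₂ → Prop) [∀ a₁ a₂, Decidable (P a₁ a₂)]
    (g₁ : α₁ → α₂ → β₁) (g₂ : α₁ → α₂ → β₂) (D : β₁ → β₂ → ℝ) :
    ∑ y₁ : β₁, ∑ y₂ : β₂,
      (∑ a₁, ∑ a₂, if P a₁ a₂ ∧ g₁ a₁ a₂ = y₁ ∧ g₂ a₁ a₂ = y₂ then S a₁ a₂ else 0) * D y₁ y₂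
      = ∑ a₁, ∑ a₂, (if P a₁ a₂ then S a₁ a₂ * D (g₁ a₁ a₂) (g₂ a₁ a₂) else 0) := by
  have h := fiber2 (fun a₁ a₂ => if P a₁ a₂ then S a₁ a₂ else 0) g₁ g₂ D
  simp only [ite_mul, zero_mul] at h
  rw [← h]
  refine Finset.sum_congr rfl fun y₁ _ => Finset.sum_congr rfl fun y₂ _ => ?_
  congr 1
  refine Finset.sum_congr rfl fun a₁ _ => Finset.sum_congr rfl fun a₂ _ => ?_
  by_cases h1 : P a₁ a₂ <;> by_cases h2 : g₁ a₁ a₂ = y₁ <;> by_cases h3 : g₂ a₁ a₂ = y₂ <;>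
    simp [h1, h2, h3]

lemma fiber1s (S : α₁ → ℝ) (g : α₁ → β) (D : β → ℝ) :
    ∑ y : β, (∑ a, if g a = y then S a else 0) * D y = ∑ a, S a * D (g a) := by
  simp_rw [Finset.sum_mul, ite_mul, zero_mul]
  rw [Finset.sum_comm]
  refine Finset.sum_congr rfl fun a _ => ?_
  simp

lemma fiber1s_weighted (S : α₁ → ℝ) (P : α₁ → Prop) [∀ a, Decidable (P a)]
    (g : α₁ → β) (D : β → ℝ) :
    ∑ y : β, (∑ a, if P a ∧ g a = y then S a else 0) * D y
      = ∑ a, (if P a then S a * D (g a) else 0) := by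
  have h := fiber1s (fun a => if P a then S a else 0) g D
  simp only [ite_mul, zero_mul] at h
  rw [← h]
  refine Finset.sum_congr rfl fun y _ => ?_
  congr 1
  refine Finset.sum_congr rfl fun a _ => ?_
  by_cases h1 : P a <;> by_cases h2 : g a = y <;> simp [h1, h2]

end Helpers


section PiHelpers
variable {ι : Type*} [Fintype ι] [DecidableEq ι] {B : ι → Type*} [∀ i, Fintype (B i)]

lemma sum_pi_mulprod (h : ∀ i, B i → ℝ) :
    ∑ g : ∀ i, B i, ∏ i, h i (g i) = ∏ i, ∑ b, h i b := by
  rw [Finset.prod_univ_sum, Fintype.piFinset_univ]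

/-- Replace the value of a family of functions at one index. -/
def sel (i₀ : ι) (F : B i₀ → ℝ) (G : ∀ k, B k → ℝ) : ∀ k, B k → ℝ :=
  fun k => if hk : k = i₀ then fun b => F (hk ▸ b) else G k

@[simp] lemma sel_same (i₀ : ι) (F : B i₀ → ℝ) (G : ∀ k, B k → ℝ) : sel i₀ F G i₀ = F := by
  simp [sel]

lemma sel_ne (i₀ : ι) (F : B i₀ → ℝ) (G : ∀ k, B k → ℝ) {k : ι} (h : k ≠ i₀) :
    sel i₀ F G k = G k := by
  simp [sel, h]

lemma prod_apply_sel (i₀ : ι) (F : B i₀ → ℝ) (G : ∀ k, B k → ℝ) (g : ∀ i, B i) :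
    ∏ k, sel i₀ F G k (g k) = F (g i₀) * ∏ k ∈ Finset.univ.erase i₀, G k (g k) := by
  rw [← Finset.mul_prod_erase Finset.univ (fun k => sel i₀ F G k (g k)) (Finset.mem_univ i₀)]
  congr 1
  · simp
  · exact Finset.prod_congr rfl fun k hk => by rw [sel_ne _ _ _ (Finset.mem_erase.1 hk).1]

lemma sum_sel (i₀ : ι) (F : B i₀ → ℝ) (G : ∀ k, B k → ℝ) :
    ∏ k, ∑ b, sel i₀ F G k b = (∑ b, F b) * ∏ k ∈ Finset.univ.erase i₀, ∑ b, G k b := by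
  rw [← Finset.mul_prod_erase Finset.univ (fun k => ∑ b, sel i₀ F G k b) (Finset.mem_univ i₀)]
  congr 1
  · simp
  · exact Finset.prod_congr rfl fun k hk =>
      Finset.sum_congr rfl fun b _ => by rw [sel_ne _ _ _ (Finset.mem_erase.1 hk).1]

lemma sum_pi_erase (i₀ : ι) (G : ∀ k, B k → ℝ) (hG : ∀ k, k ≠ i₀ → ∑ b, G k b = 1)
    (F : B i₀ → ℝ) :
    ∑ g : ∀ i, B i, (∏ k ∈ Finset.univ.erase i₀, G k (g k)) * F (g i₀) = ∑ b, F b := by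
  have key : ∀ g : ∀ i, B i, (∏ k ∈ Finset.univ.erase i₀, G k (g k)) * F (g i₀)
      = ∏ k, sel i₀ F G k (g k) := fun g => by rw [prod_apply_sel]; ring
  rw [Finset.sum_congr rfl fun g _ => key g, sum_pi_mulprod, sum_sel]
  have h1 : ∏ k ∈ Finset.univ.erase i₀, ∑ b, G k b = 1 :=
    Finset.prod_eq_one fun k hk => hG k (Finset.mem_erase.1 hk).1
  rw [h1, mul_one]

lemma sum_pi_erase_two (i₀ i₁ : ι) (hne : i₁ ≠ i₀) (G : ∀ k, B k → ℝ)
    (hG : ∀ k, k ≠ i₀ → k ≠ i₁ → ∑ b, G k b = 1) (F : B i₀ → ℝ) (F' : B i₁ → ℝ) :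
    ∑ g : ∀ i, B i, (∏ k ∈ Finset.univ.erase i₀, G k (g k)) * (F (g i₀) * F' (g i₁))
      = (∑ b, F b) * (∑ b, G i₁ b * F' b) := by
  set G' : ∀ k, B k → ℝ := sel i₁ (fun b => G i₁ b * F' b) G with hG'
  have hmem : i₁ ∈ Finset.univ.erase i₀ := Finset.mem_erase.2 ⟨hne, Finset.mem_univ _⟩
  have key : ∀ g : ∀ i, B i, (∏ k ∈ Finset.univ.erase i₀, G k (g k)) * (F (g i₀) * F' (g i₁))
      = ∏ k, sel i₀ F G' k (g k) := by
    intro g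
    rw [prod_apply_sel]
    rw [← Finset.mul_prod_erase _ (fun k => G' k (g k)) hmem,
      ← Finset.mul_prod_erase _ (fun k => G k (g k)) hmem]
    have e1 : G' i₁ (g i₁) = G i₁ (g i₁) * F' (g i₁) := by rw [hG']; simp
    have e2 : ∏ k ∈ (Finset.univ.erase i₀).erase i₁, G' k (g k)
        = ∏ k ∈ (Finset.univ.erase i₀).erase i₁, G k (g k) :=
      Finset.prod_congr rfl fun k hk => by
        rw [hG', sel_ne _ _ _ (Finset.mem_erase.1 hk).1]
    rw [e1, e2]; ring
  rw [Finset.sum_congr rfl fun g _ => key g, sum_pi_mulprod, sum_sel]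
  rw [← Finset.mul_prod_erase _ (fun k => ∑ b, G' k b) hmem]
  have e1 : (∑ b, G' i₁ b) = ∑ b, G i₁ b * F' b := by rw [hG']; simp
  have e2 : ∏ k ∈ (Finset.univ.erase i₀).erase i₁, ∑ b, G' k b = 1 :=
    Finset.prod_eq_one fun k hk => by
      rw [show (∑ b, G' k b) = ∑ b, G k b from
        Finset.sum_congr rfl fun b _ => by rw [hG', sel_ne _ _ _ (Finset.mem_erase.1 hk).1]]
      exact hG k (Finset.mem_erase.1 (Finset.mem_erase.1 hk).2).1 (Finset.mem_erase.1 hk).1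
  rw [e1, e2, mul_one]

end PiHelpers

/-! ### Basic instances and reformulations -/

instance instInhabitedLS : (t : TBT) → Inhabited (LS t)
  | .leaf _ _ => ⟨PUnit.unit⟩
  | .leader n ch =>
    haveI : ∀ i, Inhabited (LS (ch i)) := fun i => instInhabitedLS (ch i)
    ⟨⟨0, fun i => default⟩⟩
  | .follower n ch =>
    haveI : ∀ i, Inhabited (LS (ch i)) := fun i => instInhabitedLS (ch i)
    ⟨fun i => default⟩
  | .chance n _ ch =>
    haveI : ∀ i, Inhabited (LS (ch i)) := fun i => instInhabitedLS (ch i)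
    ⟨fun i => default⟩

instance instInhabitedFS : (t : TBT) → Inhabited (FS t)
  | .leaf _ _ => ⟨PUnit.unit⟩
  | .leader n ch =>
    haveI : ∀ i, Inhabited (FS (ch i)) := fun i => instInhabitedFS (ch i)
    ⟨fun i => default⟩
  | .follower n ch =>
    haveI : ∀ i, Inhabited (FS (ch i)) := fun i => instInhabitedFS (ch i)
    ⟨⟨0, fun i => default⟩⟩
  | .chance n _ ch =>
    haveI : ∀ i, Inhabited (FS (ch i)) := fun i => instInhabitedFS (ch i)
    ⟨fun i => default⟩

lemma EU_fst (t : TBT) (φ : LS t → FS t → ℝ) :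
    (EU t φ).1 = ∑ π1, ∑ π2, φ π1 π2 * (playU t π1 π2).1 := by
  simp [EU, Prod.fst_sum, Prod.smul_fst, smul_eq_mul]

lemma EU_snd (t : TBT) (φ : LS t → FS t → ℝ) :
    (EU t φ).2 = ∑ π1, ∑ π2, φ π1 π2 * (playU t π1 π2).2 := by
  simp [EU, Prod.snd_sum, Prod.smul_snd, smul_eq_mul]

/-- Conditional weight on the profiles of a child of a leader node. -/
def condL {n : ℕ} {ch : Fin (n + 1) → TBT} (φ : LS (.leader n ch) → FS (.leader n ch) → ℝ)
    (i : Fin (n + 1)) : LS (ch i) → FS (ch i) → ℝ :=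
  fun σ τ => ∑ π1 : LS (.leader n ch), ∑ π2 : FS (.leader n ch),
    if π1.1 = i ∧ π1.2 i = σ ∧ π2 i = τ then φ π1 π2 else 0

/-- Conditional weight on the profiles of a child of a follower node. -/
def condF {n : ℕ} {ch : Fin (n + 1) → TBT} (φ : LS (.follower n ch) → FS (.follower n ch) → ℝ)
    (b : Fin (n + 1)) : LS (ch b) → FS (ch b) → ℝ :=
  fun σ τ => ∑ π1 : LS (.follower n ch), ∑ π2 : FS (.follower n ch),
    if π2.1 = b ∧ π1 b = σ ∧ π2.2 b = τ then φ π1 π2 else 0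

/-- The (subnormalized) posterior on the leader's strategy in child `j` of a follower
node, conditional on the recommendation being `b`. -/
def margF {n : ℕ} {ch : Fin (n + 1) → TBT} (φ : LS (.follower n ch) → FS (.follower n ch) → ℝ)
    (b j : Fin (n + 1)) : LS (ch j) → ℝ :=
  fun σ => ∑ π1 : LS (.follower n ch), ∑ π2 : FS (.follower n ch),
    if π2.1 = b ∧ π1 j = σ then φ π1 π2 else 0

lemma IC_leader {n : ℕ} {ch : Fin (n + 1) → TBT} (φ : LS (.leader n ch) → FS (.leader n ch) → ℝ) :
    IC (.leader n ch) φ ↔ ∀ i, IC (ch i) (condL φ i) := Iff.rfl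

lemma IC_follower {n : ℕ} {ch : Fin (n + 1) → TBT}
    (φ : LS (.follower n ch) → FS (.follower n ch) → ℝ) :
    IC (.follower n ch) φ ↔
      ((∀ b b' : Fin (n + 1), ∀ τ' : FS (ch b'),
        (∑ π1 : LS (.follower n ch), ∑ π2 : FS (.follower n ch),
          if π2.1 = b then φ π1 π2 * (playU (ch b') (π1 b') τ').2 else 0) ≤
        (∑ π1 : LS (.follower n ch), ∑ π2 : FS (.follower n ch),
          if π2.1 = b then φ π1 π2 * (playU (ch b) (π1 b) (π2.2 b)).2 else 0)) ∧
      ∀ b, IC (ch b) (condF φ b)) := Iff.rfl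

lemma condL_sum_single {n : ℕ} {ch : Fin (n + 1) → TBT}
    (φ : LS (.leader n ch) → FS (.leader n ch) → ℝ) (i : Fin (n + 1))
    (C : LS (ch i) → FS (ch i) → ℝ) :
    (∑ σ, ∑ τ, condL φ i σ τ * C σ τ)
      = ∑ π1 : LS (.leader n ch), ∑ π2 : FS (.leader n ch),
          if π1.1 = i then φ π1 π2 * C (π1.2 i) (π2 i) else 0 :=
  fiber2_weighted φ (fun π1 _ => π1.1 = i) (fun π1 _ => π1.2 i) (fun _ π2 => π2 i) C

lemma condF_sum_single {n : ℕ} {ch : Fin (n + 1) → TBT}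
    (φ : LS (.follower n ch) → FS (.follower n ch) → ℝ) (b : Fin (n + 1))
    (C : LS (ch b) → FS (ch b) → ℝ) :
    (∑ σ, ∑ τ, condF φ b σ τ * C σ τ)
      = ∑ π1 : LS (.follower n ch), ∑ π2 : FS (.follower n ch),
          if π2.1 = b then φ π1 π2 * C (π1 b) (π2.2 b) else 0 :=
  fiber2_weighted φ (fun _ π2 => π2.1 = b) (fun π1 _ => π1 b) (fun _ π2 => π2.2 b) C

lemma margF_sum {n : ℕ} {ch : Fin (n + 1) → TBT}
    (φ : LS (.follower n ch) → FS (.follower n ch) → ℝ) (b j : Fin (n + 1))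
    (D : LS (ch j) → ℝ) :
    (∑ σ, margF φ b j σ * D σ)
      = ∑ π1 : LS (.follower n ch), ∑ π2 : FS (.follower n ch),
          if π2.1 = b then φ π1 π2 * D (π1 j) else 0 :=
  fiber1_weighted φ (fun _ π2 => π2.1 = b) (fun π1 _ => π1 j) D

lemma sum_choice_collapse {n : ℕ} {ch : Fin (n + 1) → TBT}
    (K : Fin (n + 1) → LS (.leader n ch) → FS (.leader n ch) → ℝ) :
    (∑ i, ∑ π1 : LS (.leader n ch), ∑ π2 : FS (.leader n ch),
        if π1.1 = i then K i π1 π2 else 0)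
      = ∑ π1 : LS (.leader n ch), ∑ π2 : FS (.leader n ch), K π1.1 π1 π2 := by
  rw [Finset.sum_comm]
  refine Finset.sum_congr rfl fun π1 _ => ?_
  rw [Finset.sum_comm]
  refine Finset.sum_congr rfl fun π2 _ => ?_
  simp

lemma sum_rec_collapse {n : ℕ} {ch : Fin (n + 1) → TBT}
    (K : Fin (n + 1) → LS (.follower n ch) → FS (.follower n ch) → ℝ) :
    (∑ b, ∑ π1 : LS (.follower n ch), ∑ π2 : FS (.follower n ch),
        if π2.1 = b then K b π1 π2 else 0)
      = ∑ π1 : LS (.follower n ch), ∑ π2 : FS (.follower n ch), K π2.1 π1 π2 := by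
  rw [Finset.sum_comm]
  refine Finset.sum_congr rfl fun π1 _ => ?_
  rw [Finset.sum_comm]
  refine Finset.sum_congr rfl fun π2 _ => ?_
  simp

lemma condL_nonneg {n : ℕ} {ch : Fin (n + 1) → TBT}
    {φ : LS (.leader n ch) → FS (.leader n ch) → ℝ} (hφ : ∀ π1 π2, 0 ≤ φ π1 π2)
    (i : Fin (n + 1)) (σ : LS (ch i)) (τ : FS (ch i)) : 0 ≤ condL φ i σ τ :=
  Finset.sum_nonneg fun π1 _ => Finset.sum_nonneg fun π2 _ => by
    split
    · exact hφ π1 π2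
    · exact le_rfl

lemma condF_nonneg {n : ℕ} {ch : Fin (n + 1) → TBT}
    {φ : LS (.follower n ch) → FS (.follower n ch) → ℝ} (hφ : ∀ π1 π2, 0 ≤ φ π1 π2)
    (b : Fin (n + 1)) (σ : LS (ch b)) (τ : FS (ch b)) : 0 ≤ condF φ b σ τ :=
  Finset.sum_nonneg fun π1 _ => Finset.sum_nonneg fun π2 _ => by
    split
    · exact hφ π1 π2
    · exact le_rfl

lemma margF_nonneg {n : ℕ} {ch : Fin (n + 1) → TBT}
    {φ : LS (.follower n ch) → FS (.follower n ch) → ℝ} (hφ : ∀ π1 π2, 0 ≤ φ π1 π2)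
    (b j : Fin (n + 1)) (σ : LS (ch j)) : 0 ≤ margF φ b j σ :=
  Finset.sum_nonneg fun π1 _ => Finset.sum_nonneg fun π2 _ => by
    split
    · exact hφ π1 π2
    · exact le_rfl

/-! ### IC is preserved by pointwise equality, scaling and addition -/

lemma IC_of_eq {t : TBT} {φ ψ : LS t → FS t → ℝ} (h : ∀ σ τ, φ σ τ = ψ σ τ)
    (hφ : IC t φ) : IC t ψ := by
  have : φ = ψ := funext fun σ => funext fun τ => h σ τ
  exact this ▸ hφ

lemma IC_zero : ∀ t : TBT, IC t (fun _ _ => 0)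
  | .leaf _ _ => trivial
  | .leader n ch => fun i =>
    IC_of_eq (fun σ τ => by simp) (IC_zero (ch i))
  | .follower n ch =>
    ⟨fun b b' τ' => by simp, fun b => IC_of_eq (fun σ τ => by simp) (IC_zero (ch b))⟩
  | .chance n p ch => fun i =>
    IC_of_eq (fun σ τ => by simp) (IC_zero (ch i))

lemma IC_smul : ∀ (t : TBT) (c : ℝ), 0 ≤ c → ∀ φ : LS t → FS t → ℝ, IC t φ →
    IC t (fun σ τ => c * φ σ τ)
  | .leaf _ _, c, hc, φ, h => trivial
  | .leader n ch, c, hc, φ, h => fun i =>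
    IC_of_eq (fun σ τ => by
        simp only [condL, Finset.mul_sum, mul_ite, mul_zero])
      (IC_smul (ch i) c hc (condL φ i) (h i))
  | .follower n ch, c, hc, φ, h => by
    refine ⟨fun b b' τ' => ?_, fun b =>
      IC_of_eq (fun σ τ => by
          simp only [condF, Finset.mul_sum, mul_ite, mul_zero])
        (IC_smul (ch b) c hc (condF φ b) (h.2 b))⟩
    have h2 := mul_le_mul_of_nonneg_left (h.1 b b' τ') hc
    rw [Finset.mul_sum, Finset.mul_sum] at h2
    simp only [Finset.mul_sum, mul_ite, mul_zero, mul_assoc] at h2 ⊢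
    exact h2
  | .chance n p ch, c, hc, φ, h => fun i =>
    IC_of_eq (fun σ τ => by
        simp only [Finset.mul_sum, mul_ite, mul_zero])
      (IC_smul (ch i) c hc _ (h i))

lemma IC_add : ∀ (t : TBT) (φ ψ : LS t → FS t → ℝ), IC t φ → IC t ψ →
    IC t (fun σ τ => φ σ τ + ψ σ τ)
  | .leaf _ _, φ, ψ, hφ, hψ => trivial
  | .leader n ch, φ, ψ, hφ, hψ => fun i =>
    IC_of_eq (fun σ τ => by
        simp only [condL, ← Finset.sum_add_distrib]
        exact Finset.sum_congr rfl fun π1 _ => Finset.sum_congr rfl fun π2 _ => by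
          split <;> simp)
      (IC_add (ch i) (condL φ i) (condL ψ i) (hφ i) (hψ i))
  | .follower n ch, φ, ψ, hφ, hψ => by
    refine ⟨fun b b' τ' => ?_, fun b =>
      IC_of_eq (fun σ τ => by
          simp only [condF, ← Finset.sum_add_distrib]
          exact Finset.sum_congr rfl fun π1 _ => Finset.sum_congr rfl fun π2 _ => by
            split <;> simp)
        (IC_add (ch b) (condF φ b) (condF ψ b) (hφ.2 b) (hψ.2 b))⟩
    have h2 := add_le_add (hφ.1 b b' τ') (hψ.1 b b' τ')
    rw [← Finset.sum_add_distrib, ← Finset.sum_add_distrib] at h2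
    simp only [← Finset.sum_add_distrib] at h2
    simp only [add_mul]
    refine le_trans (le_of_eq ?_) (le_trans h2 (le_of_eq ?_)) <;>
      refine Finset.sum_congr rfl fun π1 _ => Finset.sum_congr rfl fun π2 _ => ?_ <;>
      split <;> simp [add_mul]
  | .chance n p ch, φ, ψ, hφ, hψ => fun i =>
    IC_of_eq (fun σ τ => by
        simp only [← Finset.sum_add_distrib]
        exact Finset.sum_congr rfl fun π1 _ => Finset.sum_congr rfl fun π2 _ => by
          split <;> simp)
      (IC_add (ch i) _ _ (hφ i) (hψ i))

lemma condL_sum {n : ℕ} {ch : Fin (n + 1) → TBT}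
    (φ : LS (.leader n ch) → FS (.leader n ch) → ℝ) (C : ∀ i, LS (ch i) → FS (ch i) → ℝ) :
    (∑ i, ∑ σ, ∑ τ, condL φ i σ τ * C i σ τ)
      = ∑ π1 : LS (.leader n ch), ∑ π2 : FS (.leader n ch),
          φ π1 π2 * C π1.1 (π1.2 π1.1) (π2 π1.1) := by
  rw [Finset.sum_congr rfl fun i _ => condL_sum_single φ i (C i)]
  exact sum_choice_collapse (fun i π1 π2 => φ π1 π2 * C i (π1.2 i) (π2 i))

lemma condF_sum {n : ℕ} {ch : Fin (n + 1) → TBT}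
    (φ : LS (.follower n ch) → FS (.follower n ch) → ℝ) (C : ∀ b, LS (ch b) → FS (ch b) → ℝ) :
    (∑ b, ∑ σ, ∑ τ, condF φ b σ τ * C b σ τ)
      = ∑ π1 : LS (.follower n ch), ∑ π2 : FS (.follower n ch),
          φ π1 π2 * C π2.1 (π1 π2.1) (π2.2 π2.1) := by
  rw [Finset.sum_congr rfl fun b _ => condF_sum_single φ b (C b)]
  exact sum_rec_collapse (fun b π1 π2 => φ π1 π2 * C b (π1 b) (π2.2 b))

/-- The one-deviation principle: under an incentive-compatible (unnormalized) correlated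
commitment, no pure deviation strategy of the follower gives him more than obedience. -/
lemma IC_obed : ∀ t : TBT, NoChance t → ∀ φ : LS t → FS t → ℝ,
    (∀ π1 π2, 0 ≤ φ π1 π2) → IC t φ → ∀ τ' : FS t,
    (∑ π1, ∑ π2, φ π1 π2 * (playU t π1 τ').2) ≤ ∑ π1, ∑ π2, φ π1 π2 * (playU t π1 π2).2
  | .leaf u1 u2, _, φ, _, _, τ' => le_of_eq rfl
  | .leader n ch, hnc, φ, hφ, hIC, τ' => by
    have hnc' : ∀ i, NoChance (ch i) := hnc
    have e1 := condL_sum φ (fun i σ _ => (playU (ch i) σ (τ' i)).2)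
    have e2 := condL_sum φ (fun i σ τ => (playU (ch i) σ τ).2)
    refine le_trans (le_of_eq e1.symm) (le_trans ?_ (le_of_eq e2))
    refine Finset.sum_le_sum fun i _ => ?_
    exact IC_obed (ch i) (hnc' i) (condL φ i) (condL_nonneg hφ i) (hIC i) (τ' i)
  | .follower n ch, hnc, φ, hφ, hIC, τ' => by
    have e1 := sum_rec_collapse
      (fun _ π1 π2 => φ π1 π2 * (playU (ch τ'.1) (π1 τ'.1) (τ'.2 τ'.1)).2)
    have e2 := sum_rec_collapse (fun b π1 π2 => φ π1 π2 * (playU (ch b) (π1 b) (π2.2 b)).2)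
    refine le_trans (le_of_eq e1.symm) (le_trans ?_ (le_of_eq e2))
    exact Finset.sum_le_sum fun b _ => hIC.1 b τ'.1 (τ'.2 τ'.1)
  | .chance n p ch, hnc, _, _, _, _ => False.elim hnc

lemma sum_ite_delta {γ : Type*} [Fintype γ] (a : γ) (P : γ → Prop) [∀ x, Decidable (P x)]
    (f : γ → ℝ) :
    (∑ x, if P x then (if x = a then f x else 0) else 0) = if P a then f a else 0 := by
  rw [Finset.sum_eq_single a]
  · simp
  · intro x _ hx; simp [hx]
  · simp

/-- Marginal of a leader mixture on the strategies of a child of a leader node. -/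
def margL {n : ℕ} {ch : Fin (n + 1) → TBT} (ρ : LS (.leader n ch) → ℝ) (i : Fin (n + 1)) :
    LS (ch i) → ℝ :=
  fun σ => ∑ π1 : LS (.leader n ch), if π1.1 = i ∧ π1.2 i = σ then ρ π1 else 0

/-- Marginal of a leader mixture on the strategies of a child of a follower node. -/
def margP {n : ℕ} {ch : Fin (n + 1) → TBT} (ρ : LS (.follower n ch) → ℝ) (b : Fin (n + 1)) :
    LS (ch b) → ℝ :=
  fun σ => ∑ π1 : LS (.follower n ch), if π1 b = σ then ρ π1 else 0

lemma margL_nonneg {n : ℕ} {ch : Fin (n + 1) → TBT} {ρ : LS (.leader n ch) → ℝ}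
    (hρ : ∀ σ, 0 ≤ ρ σ) (i : Fin (n + 1)) (σ : LS (ch i)) : 0 ≤ margL ρ i σ := by
  refine Finset.sum_nonneg fun π1 _ => ?_
  split
  · exact hρ π1
  · exact le_rfl

lemma margP_nonneg {n : ℕ} {ch : Fin (n + 1) → TBT} {ρ : LS (.follower n ch) → ℝ}
    (hρ : ∀ σ, 0 ≤ ρ σ) (b : Fin (n + 1)) (σ : LS (ch b)) : 0 ≤ margP ρ b σ := by
  refine Finset.sum_nonneg fun π1 _ => ?_
  split
  · exact hρ π1
  · exact le_rfl

lemma sum_choice_collapse1 {n : ℕ} {ch : Fin (n + 1) → TBT}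
    (K : Fin (n + 1) → LS (.leader n ch) → ℝ) :
    (∑ i, ∑ π1 : LS (.leader n ch), if π1.1 = i then K i π1 else 0)
      = ∑ π1 : LS (.leader n ch), K π1.1 π1 := by
  rw [Finset.sum_comm]
  refine Finset.sum_congr rfl fun π1 _ => ?_
  simp

lemma margL_sum {n : ℕ} {ch : Fin (n + 1) → TBT} (ρ : LS (.leader n ch) → ℝ)
    (D : ∀ i, LS (ch i) → ℝ) :
    (∑ i, ∑ σ, margL ρ i σ * D i σ) = ∑ π1 : LS (.leader n ch), ρ π1 * D π1.1 (π1.2 π1.1) := by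
  refine Eq.trans (Finset.sum_congr rfl fun i _ => ?_)
    (sum_choice_collapse1 (fun i π1 => ρ π1 * D i (π1.2 i)))
  exact fiber1s_weighted ρ (fun π1 => π1.1 = i) (fun π1 => π1.2 i) (D i)

lemma margP_sum {n : ℕ} {ch : Fin (n + 1) → TBT} (ρ : LS (.follower n ch) → ℝ)
    (b : Fin (n + 1)) (D : LS (ch b) → ℝ) :
    (∑ σ, margP ρ b σ * D σ) = ∑ π1 : LS (.follower n ch), ρ π1 * D (π1 b) :=
  fiber1s ρ (fun π1 => π1 b) D

/-- For every leader mixture there is a follower best response which, recommended as a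
pure strategy, is incentive compatible, and it maximizes the follower's utility. -/
lemma exists_br : ∀ t : TBT, NoChance t → ∀ ρ : LS t → ℝ, (∀ σ, 0 ≤ ρ σ) →
    ∃ τs : FS t, IC t (fun σ τ => if τ = τs then ρ σ else 0) ∧
      ∀ τ : FS t, (∑ σ, ρ σ * (playU t σ τ).2) ≤ ∑ σ, ρ σ * (playU t σ τs).2
  | .leaf u1 u2, _, ρ, hρ => ⟨PUnit.unit, trivial, fun τ => le_of_eq rfl⟩
  | .leader n ch, hnc, ρ, hρ => by
    have hnc' : ∀ i, NoChance (ch i) := hnc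
    choose τs hICs hopt using fun i =>
      exists_br (ch i) (hnc' i) (margL ρ i) (margL_nonneg hρ i)
    set τvec : FS (.leader n ch) := fun i => τs i with hτvec
    refine ⟨τvec, ?_, ?_⟩
    · rw [IC_leader]
      intro i
      refine IC_of_eq (fun σ τ => ?_) (hICs i)
      show (if τ = τs i then margL ρ i σ else 0) = condL _ i σ τ
      rw [condL]
      have inner : ∀ π1 : LS (.leader n ch),
          (∑ π2 : FS (.leader n ch), if π1.1 = i ∧ π1.2 i = σ ∧ π2 i = τ
              then (if π2 = τvec then ρ π1 else 0) else 0)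
            = if π1.1 = i ∧ π1.2 i = σ ∧ τvec i = τ then ρ π1 else 0 :=
        fun π1 => sum_ite_delta τvec (fun π2 => π1.1 = i ∧ π1.2 i = σ ∧ π2 i = τ)
          (fun _ => ρ π1)
      rw [Finset.sum_congr rfl fun π1 _ => inner π1]
      by_cases hτ : τ = τs i
      · subst hτ
        simp [margL, hτvec]
      · have : ¬ (τvec i = τ) := fun h => hτ (h.symm)
        simp [this, hτ]
    · intro τ
      have e1 := margL_sum ρ (fun i σ => (playU (ch i) σ (τ i)).2)
      have e2 := margL_sum ρ (fun i σ => (playU (ch i) σ (τs i)).2)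
      refine le_trans (le_of_eq e1.symm) (le_trans ?_ (le_of_eq e2))
      exact Finset.sum_le_sum fun i _ => hopt i (τ i)
  | .follower n ch, hnc, ρ, hρ => by
    have hnc' : ∀ b, NoChance (ch b) := hnc
    choose τs hICs hopt using fun b =>
      exists_br (ch b) (hnc' b) (margP ρ b) (margP_nonneg hρ b)
    set v : Fin (n + 1) → ℝ := fun b => ∑ σ, margP ρ b σ * (playU (ch b) σ (τs b)).2 with hv
    obtain ⟨bs, -, hbs⟩ := Finset.exists_max_image Finset.univ v ⟨0, Finset.mem_univ 0⟩
    set τvec : FS (.follower n ch) := ⟨bs, fun b => τs b⟩ with hτvec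
    have key : ∀ (b b' : Fin (n + 1)) (u : LS (.follower n ch) → FS (.follower n ch) → ℝ),
        (∑ π1 : LS (.follower n ch), ∑ π2 : FS (.follower n ch),
          if π2.1 = b then (if π2 = τvec then ρ π1 else 0) * u π1 π2 else 0)
          = if bs = b then ∑ π1 : LS (.follower n ch), ρ π1 * u π1 τvec else 0 := by
      intro b b' u
      have inner : ∀ π1 : LS (.follower n ch),
          (∑ π2 : FS (.follower n ch),
            if π2.1 = b then (if π2 = τvec then ρ π1 * u π1 π2 else 0) else 0)
            = if bs = b then ρ π1 * u π1 τvec else 0 :=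
        fun π1 => sum_ite_delta τvec (fun π2 => π2.1 = b) (fun π2 => ρ π1 * u π1 π2)
      simp only [ite_mul, zero_mul]
      rw [Finset.sum_congr rfl fun π1 _ => inner π1]
      by_cases h : bs = b <;> simp [h]
    refine ⟨τvec, ?_, ?_⟩
    · rw [IC_follower]
      constructor
      · intro b b' τ''
        rw [key b b' (fun π1 π2 => (playU (ch b') (π1 b') τ'').2),
          key b b (fun π1 π2 => (playU (ch b) (π1 b) (π2.2 b)).2)]
        by_cases h : bs = b
        · simp only [if_pos h]
          subst h
          have l1 : (∑ π1 : LS (.follower n ch), ρ π1 * (playU (ch b') (π1 b') τ'').2)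
              = ∑ σ, margP ρ b' σ * (playU (ch b') σ τ'').2 :=
              (margP_sum ρ b' (fun σ => (playU (ch b') σ τ'').2)).symm
          have l2 : (∑ π1 : LS (.follower n ch), ρ π1 * (playU (ch bs) (π1 bs) (τs bs)).2)
              = v bs := (margP_sum ρ bs (fun σ => (playU (ch bs) σ (τs bs)).2)).symm
          rw [l1]
          show _ ≤ ∑ π1 : LS (.follower n ch), ρ π1 * (playU (ch bs) (π1 bs) (τs bs)).2
          rw [l2]
          exact le_trans (hopt b' τ'') (hbs b' (Finset.mem_univ b'))
        · simp [h]
      · intro b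
        by_cases h : bs = b
        · subst h
          refine IC_of_eq (fun σ τ => ?_) (hICs bs)
          show (if τ = τs bs then margP ρ bs σ else 0) = condF _ bs σ τ
          rw [condF]
          have inner : ∀ π1 : LS (.follower n ch),
              (∑ π2 : FS (.follower n ch), if π2.1 = bs ∧ π1 bs = σ ∧ π2.2 bs = τ
                  then (if π2 = τvec then ρ π1 else 0) else 0)
                = if π1 bs = σ ∧ τs bs = τ then ρ π1 else 0 := by
            intro π1
            rw [sum_ite_delta τvec (fun π2 => π2.1 = bs ∧ π1 bs = σ ∧ π2.2 bs = τ)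
              (fun _ => ρ π1)]
            simp [hτvec]
          rw [Finset.sum_congr rfl fun π1 _ => inner π1]
          by_cases hτ : τ = τs bs
          · subst hτ
            simp [margP]
          · have : ¬ (τs bs = τ) := fun h2 => hτ h2.symm
            simp [this, hτ]
        · refine IC_of_eq (fun σ τ => ?_) (IC_zero (ch b))
          show (0 : ℝ) = condF _ b σ τ
          rw [condF]
          have inner : ∀ π1 : LS (.follower n ch),
              (∑ π2 : FS (.follower n ch), if π2.1 = b ∧ π1 b = σ ∧ π2.2 b = τ
                  then (if π2 = τvec then ρ π1 else 0) else 0) = 0 := by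
            intro π1
            rw [sum_ite_delta τvec (fun π2 => π2.1 = b ∧ π1 b = σ ∧ π2.2 b = τ)
              (fun _ => ρ π1)]
            have : ¬ ((τvec.1 = b) ∧ π1 b = σ ∧ τvec.2 b = τ) := fun hcon => h hcon.1
            simp [this]
          rw [Finset.sum_congr rfl fun π1 _ => inner π1]
          simp
    · intro τ
      show (∑ σ, ρ σ * (playU (ch τ.1) (σ τ.1) (τ.2 τ.1)).2)
        ≤ ∑ σ, ρ σ * (playU (ch bs) (σ bs) (τs bs)).2
      rw [← margP_sum ρ τ.1 (fun σ => (playU (ch τ.1) σ (τ.2 τ.1)).2),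
        ← margP_sum ρ bs (fun σ => (playU (ch bs) σ (τs bs)).2)]
      exact le_trans (hopt τ.1 (τ.2 τ.1)) (hbs τ.1 (Finset.mem_univ τ.1))
  | .chance n p ch, hnc, _, _ => False.elim hnc

lemma sum_pi_full {ι : Type*} [Fintype ι] [DecidableEq ι] {B : ι → Type*} [∀ i, Fintype (B i)]
    (i₀ : ι) (G : ∀ k, B k → ℝ) (hG : ∀ k, k ≠ i₀ → ∑ b, G k b = 1) (F : B i₀ → ℝ) :
    ∑ g : ∀ i, B i, (∏ k, G k (g k)) * F (g i₀) = ∑ b, G i₀ b * F b := by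
  rw [← sum_pi_erase i₀ G hG (fun b => G i₀ b * F b)]
  refine Finset.sum_congr rfl fun g _ => ?_
  rw [← Finset.mul_prod_erase Finset.univ (fun k => G k (g k)) (Finset.mem_univ i₀)]
  ring

lemma sum_zero_of_mass_zero {γ δ : Type*} [Fintype γ] [Fintype δ] (w : γ → δ → ℝ)
    (h0 : ∀ x y, 0 ≤ w x y) (hm : (∑ x, ∑ y, w x y) = 0) (C : γ → δ → ℝ) :
    ∑ x, ∑ y, w x y * C x y = 0 := by
  have h1 := (Finset.sum_eq_zero_iff_of_nonneg
    (fun x _ => Finset.sum_nonneg fun y _ => h0 x y)).1 hm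
  have hz : ∀ x y, w x y = 0 := fun x y =>
    (Finset.sum_eq_zero_iff_of_nonneg (fun y _ => h0 x y)).1 (h1 x (Finset.mem_univ x)) y
      (Finset.mem_univ y)
  exact Finset.sum_eq_zero fun x _ => Finset.sum_eq_zero fun y _ => by rw [hz x y, zero_mul]

lemma delta_mass (t : TBT) (ρ : LS t → ℝ) (τs : FS t) :
    (∑ σ : LS t, ∑ τ : FS t, if τ = τs then ρ σ else 0) = ∑ σ, ρ σ := by
  refine Finset.sum_congr rfl fun σ _ => ?_
  simp

lemma EU_delta_snd (t : TBT) (ρ : LS t → ℝ) (τs : FS t) :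
    (EU t (fun σ τ => if τ = τs then ρ σ else 0)).2 = ∑ σ, ρ σ * (playU t σ τs).2 := by
  rw [EU_snd]
  refine Finset.sum_congr rfl fun σ _ => ?_
  simp [ite_mul]

lemma EU_delta_fst (t : TBT) (ρ : LS t → ℝ) (τs : FS t) :
    (EU t (fun σ τ => if τ = τs then ρ σ else 0)).1 = ∑ σ, ρ σ * (playU t σ τs).1 := by
  rw [EU_fst]
  refine Finset.sum_congr rfl fun σ _ => ?_
  simp [ite_mul]

lemma delta_isDist (t : TBT) (ρ : LS t → ℝ) (hρ0 : ∀ σ, 0 ≤ ρ σ) (hρ1 : (∑ σ, ρ σ) = 1)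
    (τs : FS t) : IsDist t (fun σ τ => if τ = τs then ρ σ else 0) := by
  constructor
  · intro π1 π2
    by_cases h : π2 = τs <;> simp [h, hρ0 π1]
  · rw [delta_mass, hρ1]

lemma achievable_nonempty (t : TBT) (hnc : NoChance t) : (AchievableSet t).Nonempty := by
  set ρ : LS t → ℝ := fun σ => if σ = default then 1 else 0 with hρ
  have hρ0 : ∀ σ, 0 ≤ ρ σ := fun σ => by rw [hρ]; dsimp only; split <;> norm_num
  have hρ1 : (∑ σ, ρ σ) = 1 := by simp [hρ]
  obtain ⟨τs, hIC, -⟩ := exists_br t hnc ρ hρ0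
  exact ⟨_, _, delta_isDist t ρ hρ0 hρ1 τs, hIC, rfl⟩

lemma achievable_fst_lb (t : TBT) :
    ∃ m : ℝ, ∀ p ∈ AchievableSet t, m ≤ p.1 := by
  set m : ℝ := Finset.univ.inf' Finset.univ_nonempty
    (fun q : LS t × FS t => (playU t q.1 q.2).2) with hm
  refine ⟨m, ?_⟩
  rintro p ⟨φ, ⟨hφ0, hφ1⟩, -, rfl⟩
  show m ≤ (EU t φ).2
  rw [EU_snd]
  have step : ∀ π1 π2, φ π1 π2 * m ≤ φ π1 π2 * (playU t π1 π2).2 := fun π1 π2 =>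
    mul_le_mul_of_nonneg_left
      (Finset.inf'_le _ (Finset.mem_univ ((π1, π2) : LS t × FS t))) (hφ0 π1 π2)
  have e1 : m = (∑ π1, ∑ π2, φ π1 π2) * m := by rw [hφ1, one_mul]
  have e2 : (∑ π1 : LS t, ∑ π2 : FS t, φ π1 π2) * m = ∑ π1, ∑ π2, φ π1 π2 * m := by
    rw [Finset.sum_mul]
    exact Finset.sum_congr rfl fun π1 _ => by rw [Finset.sum_mul]
  rw [e1, e2]
  exact Finset.sum_le_sum fun π1 _ => Finset.sum_le_sum fun π2 _ => step π1 π2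

lemma achievable_bddBelow (t : TBT) : BddBelow (Prod.fst '' AchievableSet t) := by
  obtain ⟨m, hm⟩ := achievable_fst_lb t
  exact ⟨m, by rintro x ⟨p, hp, rfl⟩; exact hm p hp⟩

lemma EU_combo (t : TBT) (φ ψ : LS t → FS t → ℝ) (a b : ℝ) :
    EU t (fun σ τ => a * φ σ τ + b * ψ σ τ) = a • EU t φ + b • EU t ψ := by
  simp only [EU, add_smul, mul_smul, Finset.sum_add_distrib, Finset.smul_sum]

lemma achievable_convex (t : TBT) : Convex ℝ (AchievableSet t) := by
  rintro p ⟨φ, ⟨hφ0, hφ1⟩, hφIC, rfl⟩ q ⟨ψ, ⟨hψ0, hψ1⟩, hψIC, rfl⟩ a b ha hb hab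
  refine ⟨fun σ τ => a * φ σ τ + b * ψ σ τ, ⟨?_, ?_⟩, ?_, ?_⟩
  · intro π1 π2
    have := add_le_add (mul_nonneg ha (hφ0 π1 π2)) (mul_nonneg hb (hψ0 π1 π2))
    simpa using this
  · simp only [Finset.sum_add_distrib, ← Finset.mul_sum]
    rw [hφ1, hψ1, mul_one, mul_one, hab]
  · exact IC_add t _ _ (IC_smul t a ha φ hφIC) (IC_smul t b hb ψ hψIC)
  · rw [EU_combo]
    simp [Prod.ext_iff, Prod.smul_fst, Prod.smul_snd, smul_eq_mul]

lemma EU_smul (t : TBT) (w : LS t → FS t → ℝ) (c : ℝ) :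
    EU t (fun σ τ => c * w σ τ) = c • EU t w := by
  simp only [EU, mul_smul, Finset.smul_sum]

lemma norm_dist_IC {t : TBT} (w : LS t → FS t → ℝ) (h0 : ∀ σ τ, 0 ≤ w σ τ) (hIC : IC t w)
    (hlz : (∑ σ, ∑ τ, w σ τ) ≠ 0) :
    IsDist t (fun σ τ => (∑ σ', ∑ τ', w σ' τ')⁻¹ * w σ τ) ∧
      IC t (fun σ τ => (∑ σ', ∑ τ', w σ' τ')⁻¹ * w σ τ) := by
  have hnn : 0 ≤ ∑ σ, ∑ τ, w σ τ :=
    Finset.sum_nonneg fun σ _ => Finset.sum_nonneg fun τ _ => h0 σ τ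
  have hinv : 0 ≤ (∑ σ : LS t, ∑ τ : FS t, w σ τ)⁻¹ := inv_nonneg.2 hnn
  refine ⟨⟨fun σ τ => mul_nonneg hinv (h0 σ τ), ?_⟩, IC_smul t _ hinv w hIC⟩
  simp only [← Finset.mul_sum]
  exact inv_mul_cancel₀ hlz

lemma condL_mass {n : ℕ} {ch : Fin (n + 1) → TBT}
    (φ : LS (.leader n ch) → FS (.leader n ch) → ℝ) :
    (∑ i, ∑ σ, ∑ τ, condL φ i σ τ) = ∑ π1, ∑ π2, φ π1 π2 := by
  simpa [mul_one] using condL_sum φ (fun _ _ _ => 1)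

lemma condF_mass {n : ℕ} {ch : Fin (n + 1) → TBT}
    (φ : LS (.follower n ch) → FS (.follower n ch) → ℝ) :
    (∑ b, ∑ σ, ∑ τ, condF φ b σ τ) = ∑ π1, ∑ π2, φ π1 π2 := by
  simpa [mul_one] using condF_sum φ (fun _ _ _ => 1)

lemma margF_mass {n : ℕ} {ch : Fin (n + 1) → TBT}
    (φ : LS (.follower n ch) → FS (.follower n ch) → ℝ) (b j : Fin (n + 1)) :
    (∑ σ, margF φ b j σ) = ∑ σ, ∑ τ, condF φ b σ τ := by
  have h1 := margF_sum φ b j (fun _ => 1)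
  have h2 := condF_sum_single φ b (fun _ _ => 1)
  simp only [mul_one] at h1 h2
  rw [h1, h2]

/-- The leader can commit to a mixture that holds every incentive-compatible correlated
commitment's follower value from below. -/
lemma exists_punish : ∀ t : TBT, NoChance t → ∃ ρ : LS t → ℝ,
    (∀ σ, 0 ≤ ρ σ) ∧ (∑ σ, ρ σ) = 1 ∧
    ∀ φ : LS t → FS t → ℝ, IsDist t φ → IC t φ → ∀ τ : FS t,
      (∑ σ, ρ σ * (playU t σ τ).2) ≤ (EU t φ).2
  | .leaf u1 u2, _ => by
    refine ⟨fun _ => 1, fun _ => zero_le_one, by show (∑ _ : PUnit, (1:ℝ)) = 1; simp, ?_⟩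
    rintro φ ⟨hφ0, hφ1⟩ - τ
    have : (EU (.leaf u1 u2) φ).2 = u2 := by
      rw [EU_snd]
      have e : ∀ π1 : LS (.leaf u1 u2), ∀ π2 : FS (.leaf u1 u2),
          φ π1 π2 * (playU (.leaf u1 u2) π1 π2).2 = φ π1 π2 * u2 := fun _ _ => rfl
      rw [Finset.sum_congr rfl fun π1 _ => Finset.sum_congr rfl fun π2 _ => e π1 π2]
      have e2 : (∑ π1 : LS (.leaf u1 u2), ∑ π2 : FS (.leaf u1 u2), φ π1 π2 * u2)
          = (∑ π1 : LS (.leaf u1 u2), ∑ π2 : FS (.leaf u1 u2), φ π1 π2) * u2 := by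
        rw [Finset.sum_mul]
        exact Finset.sum_congr rfl fun π1 _ => by rw [Finset.sum_mul]
      rw [e2, hφ1, one_mul]
    rw [this]
    show (∑ _ : PUnit, (1:ℝ) * u2) ≤ u2
    simp
  | .leader n ch, hnc => by
    have hnc' : ∀ i, NoChance (ch i) := hnc
    choose ρs h0 h1 hpun using fun i => exists_punish (ch i) (hnc' i)
    have hFSne : ∀ i, (Finset.univ : Finset (FS (ch i))).Nonempty :=
      fun i => Finset.univ_nonempty
    set w : Fin (n + 1) → ℝ := fun i => Finset.univ.sup' (hFSne i)
      (fun τ : FS (ch i) => ∑ σ, ρs i σ * (playU (ch i) σ τ).2) with hw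
    obtain ⟨is, -, his⟩ := Finset.exists_min_image Finset.univ w ⟨0, Finset.mem_univ 0⟩
    refine ⟨fun π1 => if π1.1 = is then ∏ k, ρs k (π1.2 k) else 0, ?_, ?_, ?_⟩
    · intro π1
      dsimp only
      split
      · exact Finset.prod_nonneg fun k _ => h0 k _
      · exact le_rfl
    · show (∑ π1 : Fin (n + 1) × (∀ i, LS (ch i)),
          if π1.1 = is then ∏ k, ρs k (π1.2 k) else 0) = 1
      rw [Fintype.sum_prod_type]
      rw [Finset.sum_eq_single is]
      · have e : (∑ y : ∀ i, LS (ch i), ∏ k, ρs k (y k)) = 1 := by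
          rw [sum_pi_mulprod]
          exact Finset.prod_eq_one fun k _ => h1 k
        simpa using e
      · intro x _ hx
        simp [hx]
      · simp
    · rintro φ ⟨hφ0, hφ1⟩ hICφ τ
      -- the value of the punishing mixture
      have hval : (∑ σ : LS (.leader n ch),
            (if σ.1 = is then ∏ k, ρs k (σ.2 k) else 0) * (playU (.leader n ch) σ τ).2)
          = ∑ b, ρs is b * (playU (ch is) b (τ is)).2 := by
        show (∑ σ : Fin (n + 1) × (∀ i, LS (ch i)), (if σ.1 = is then ∏ k, ρs k (σ.2 k) else 0)
            * (playU (ch σ.1) (σ.2 σ.1) (τ σ.1)).2) = _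
        rw [Fintype.sum_prod_type]
        rw [Finset.sum_eq_single is]
        · have e := sum_pi_full is ρs (fun k hk => h1 k)
            (fun b => (playU (ch is) b (τ is)).2)
          simpa using e
        · intro x _ hx
          simp [hx]
        · simp
      rw [hval]
      -- child masses and values
      set lam : Fin (n + 1) → ℝ := fun i => ∑ σ, ∑ τ', condL φ i σ τ' with hlam
      set s : Fin (n + 1) → ℝ :=
        fun i => ∑ σ, ∑ τ', condL φ i σ τ' * (playU (ch i) σ τ').2 with hs
      have hlam0 : ∀ i, 0 ≤ lam i := fun i =>
        Finset.sum_nonneg fun σ _ => Finset.sum_nonneg fun τ' _ => condL_nonneg hφ0 i σ τ'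
      have hlam1 : (∑ i, lam i) = 1 := by rw [hlam]; rw [condL_mass φ, hφ1]
      have hRHS : (EU (.leader n ch) φ).2 = ∑ i, s i := by
        rw [EU_snd, hs]
        exact (condL_sum φ (fun i σ τ' => (playU (ch i) σ τ').2)).symm
      have claim : ∀ i, lam i * w is ≤ s i := by
        intro i
        by_cases hlz : lam i = 0
        · rw [hlz, zero_mul]
          exact le_of_eq (sum_zero_of_mass_zero (condL φ i) (condL_nonneg hφ0 i) hlz
            (fun σ τ' => (playU (ch i) σ τ').2)).symm
        · have hpos : 0 < lam i := lt_of_le_of_ne (hlam0 i) (Ne.symm hlz)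
          obtain ⟨hdist, hICn⟩ := norm_dist_IC (condL φ i) (condL_nonneg hφ0 i) (hICφ i) hlz
          have hx : (EU (ch i)
                (fun σ τ' => (∑ σ', ∑ τ', condL φ i σ' τ')⁻¹ * condL φ i σ τ')).2
              = (lam i)⁻¹ * s i := by
            rw [EU_smul, Prod.smul_snd, smul_eq_mul, EU_snd]
          have hw_le : w i ≤ (lam i)⁻¹ * s i := by
            refine Finset.sup'_le _ _ fun τ0 _ => ?_
            have := hpun i _ hdist hICn τ0
            rw [hx] at this
            exact this
          have : lam i * w i ≤ s i := by
            have h2 := mul_le_mul_of_nonneg_left hw_le (hlam0 i)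
            rwa [← mul_assoc, mul_inv_cancel₀ hlz, one_mul] at h2
          exact le_trans (mul_le_mul_of_nonneg_left (his i (Finset.mem_univ i)) (hlam0 i)) this
      have hfin : (∑ b, ρs is b * (playU (ch is) b (τ is)).2) ≤ w is :=
        Finset.le_sup' (fun τ0 : FS (ch is) => ∑ σ, ρs is σ * (playU (ch is) σ τ0).2)
          (Finset.mem_univ (τ is))
      calc (∑ b, ρs is b * (playU (ch is) b (τ is)).2) ≤ w is := hfin
        _ = ∑ i, lam i * w is := by rw [← Finset.sum_mul, hlam1, one_mul]
        _ ≤ ∑ i, s i := Finset.sum_le_sum fun i _ => claim i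
        _ = (EU (.leader n ch) φ).2 := hRHS.symm
  | .follower n ch, hnc => by
    have hnc' : ∀ b, NoChance (ch b) := hnc
    choose ρs h0 h1 hpun using fun b => exists_punish (ch b) (hnc' b)
    refine ⟨fun π1 => ∏ b, ρs b (π1 b), ?_, ?_, ?_⟩
    · exact fun π1 => Finset.prod_nonneg fun k _ => h0 k _
    · show (∑ g : ∀ b, LS (ch b), ∏ b, ρs b (g b)) = 1
      rw [sum_pi_mulprod]
      exact Finset.prod_eq_one fun k _ => h1 k
    · rintro φ ⟨hφ0, hφ1⟩ hICφ τ
      have hval : (∑ σ : LS (.follower n ch),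
            (∏ b, ρs b (σ b)) * (playU (.follower n ch) σ τ).2)
          = ∑ b, ρs τ.1 b * (playU (ch τ.1) b (τ.2 τ.1)).2 := by
        show (∑ g : ∀ b, LS (ch b),
            (∏ b, ρs b (g b)) * (playU (ch τ.1) (g τ.1) (τ.2 τ.1)).2) = _
        exact sum_pi_full τ.1 ρs (fun k _ => h1 k) (fun b => (playU (ch τ.1) b (τ.2 τ.1)).2)
      rw [hval]
      set val : ℝ := ∑ b, ρs τ.1 b * (playU (ch τ.1) b (τ.2 τ.1)).2 with hvaldef
      set lam : Fin (n + 1) → ℝ := fun b => ∑ σ, ∑ τ', condF φ b σ τ' with hlam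
      set s : Fin (n + 1) → ℝ :=
        fun b => ∑ σ, ∑ τ', condF φ b σ τ' * (playU (ch b) σ τ').2 with hs
      have hlam0 : ∀ b, 0 ≤ lam b := fun b =>
        Finset.sum_nonneg fun σ _ => Finset.sum_nonneg fun τ' _ => condF_nonneg hφ0 b σ τ'
      have hlam1 : (∑ b, lam b) = 1 := by rw [hlam]; rw [condF_mass φ, hφ1]
      have hRHS : (EU (.follower n ch) φ).2 = ∑ b, s b := by
        rw [EU_snd, hs]
        exact (condF_sum φ (fun b σ τ' => (playU (ch b) σ τ').2)).symm
      have claim : ∀ b, lam b * val ≤ s b := by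
        intro b
        by_cases hlz : lam b = 0
        · rw [hlz, zero_mul]
          exact le_of_eq (sum_zero_of_mass_zero (condF φ b) (condF_nonneg hφ0 b) hlz
            (fun σ τ' => (playU (ch b) σ τ').2)).symm
        · have hpos : 0 < lam b := lt_of_le_of_ne (hlam0 b) (Ne.symm hlz)
          obtain ⟨hdist, hICn⟩ := norm_dist_IC (condF φ b) (condF_nonneg hφ0 b) (hICφ.2 b) hlz
          have hx : (EU (ch b)
                (fun σ τ' => (∑ σ', ∑ τ', condF φ b σ' τ')⁻¹ * condF φ b σ τ')).2
              = (lam b)⁻¹ * s b := by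
            rw [EU_smul, Prod.smul_snd, smul_eq_mul, EU_snd]
          have hvalx : val ≤ (lam b)⁻¹ * s b := by
            by_cases hb : τ.1 = b
            · subst hb
              have := hpun τ.1 _ hdist hICn (τ.2 τ.1)
              rw [hx] at this
              exact this
            · -- deviation argument through the posterior on child τ.1
              set rho : LS (ch τ.1) → ℝ := fun σ' => (lam b)⁻¹ * margF φ b τ.1 σ' with hrho
              have hrho0 : ∀ σ', 0 ≤ rho σ' := fun σ' =>
                mul_nonneg (inv_nonneg.2 (hlam0 b)) (margF_nonneg hφ0 b τ.1 σ')
              have hrho1 : (∑ σ', rho σ') = 1 := by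
                rw [hrho]
                rw [← Finset.mul_sum, margF_mass φ b τ.1]
                exact inv_mul_cancel₀ hlz
              obtain ⟨τstar, hICstar, -⟩ := exists_br (ch τ.1) (hnc' τ.1) rho hrho0
              have hdist' := delta_isDist (ch τ.1) rho hrho0 hrho1 τstar
              have hx' : (EU (ch τ.1) (fun σ' τ'' => if τ'' = τstar then rho σ' else 0)).2
                  = ∑ σ', rho σ' * (playU (ch τ.1) σ' τstar).2 := EU_delta_snd _ _ _
              have step1 : val ≤ ∑ σ', rho σ' * (playU (ch τ.1) σ' τstar).2 := by
                have := hpun τ.1 _ hdist' hICstar (τ.2 τ.1)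
                rw [hx'] at this
                exact this
              have step2 : (∑ σ', rho σ' * (playU (ch τ.1) σ' τstar).2)
                  ≤ (lam b)⁻¹ * s b := by
                have hmarg : (∑ σ', margF φ b τ.1 σ' * (playU (ch τ.1) σ' τstar).2) ≤ s b := by
                  rw [margF_sum φ b τ.1 (fun σ' => (playU (ch τ.1) σ' τstar).2)]
                  exact le_trans (hICφ.1 b τ.1 τstar)
                    (le_of_eq (condF_sum_single φ b
                      (fun σ' τ'' => (playU (ch b) σ' τ'').2)).symm)
                have e : (∑ σ', rho σ' * (playU (ch τ.1) σ' τstar).2)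
                    = (lam b)⁻¹ * ∑ σ', margF φ b τ.1 σ' * (playU (ch τ.1) σ' τstar).2 := by
                  rw [Finset.mul_sum]
                  exact Finset.sum_congr rfl fun σ' _ => by rw [hrho]; ring
                rw [e]
                exact mul_le_mul_of_nonneg_left hmarg (inv_nonneg.2 (hlam0 b))
              exact le_trans step1 step2
          have h2 := mul_le_mul_of_nonneg_left hvalx (hlam0 b)
          rwa [← mul_assoc, mul_inv_cancel₀ hlz, one_mul] at h2
      calc val = ∑ b, lam b * val := by rw [← Finset.sum_mul, hlam1, one_mul]
        _ ≤ ∑ b, s b := Finset.sum_le_sum fun b _ => claim b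
        _ = (EU (.follower n ch) φ).2 := hRHS.symm
  | .chance n p ch, hnc => False.elim hnc

/-- Delta distribution on a finite inhabited type. -/
def dflt (γ : Type*) [Fintype γ] [Inhabited γ] : γ → ℝ := fun x => if x = default then 1 else 0

lemma dflt_nonneg (γ : Type*) [Fintype γ] [Inhabited γ] (x : γ) : 0 ≤ dflt γ x := by
  simp only [dflt]
  split <;> norm_num

lemma dflt_sum (γ : Type*) [Fintype γ] [Inhabited γ] : (∑ x, dflt γ x) = 1 := by
  simp [dflt]

lemma embed_leader {n : ℕ} {ch : Fin (n + 1) → TBT} (i : Fin (n + 1))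
    (q : ℝ × ℝ) (hq : q ∈ AchievableSet (ch i)) : q ∈ AchievableSet (.leader n ch) := by
  obtain ⟨ψ, ⟨hψ0, hψ1⟩, hψIC, rfl⟩ := hq
  set dl : ∀ k, LS (ch k) → ℝ := fun k => dflt (LS (ch k)) with hdl
  set df : ∀ k, FS (ch k) → ℝ := fun k => dflt (FS (ch k)) with hdf
  set Φ : LS (.leader n ch) → FS (.leader n ch) → ℝ := fun π1 π2 =>
    if π1.1 = i then ψ (π1.2 i) (π2 i) *
      ((∏ k ∈ Finset.univ.erase i, dl k (π1.2 k)) *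
        (∏ k ∈ Finset.univ.erase i, df k (π2 k))) else 0 with hΦ
  have hΦ0 : ∀ π1 π2, 0 ≤ Φ π1 π2 := by
    intro π1 π2
    simp only [hΦ]
    split
    · exact mul_nonneg (hψ0 _ _) (mul_nonneg
        (Finset.prod_nonneg fun k _ => dflt_nonneg _ _)
        (Finset.prod_nonneg fun k _ => dflt_nonneg _ _))
    · exact le_rfl
  have key : ∀ C : LS (ch i) → FS (ch i) → ℝ,
      (∑ π1 : LS (.leader n ch), ∑ π2 : FS (.leader n ch), Φ π1 π2 * C (π1.2 i) (π2 i))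
        = ∑ σ, ∑ τ, ψ σ τ * C σ τ := by
    intro C
    have inner : ∀ f : ∀ k, LS (ch k),
        (∑ g : ∀ k, FS (ch k),
          (ψ (f i) (g i) * ((∏ k ∈ Finset.univ.erase i, dl k (f k)) *
            (∏ k ∈ Finset.univ.erase i, df k (g k)))) * C (f i) (g i))
          = (∏ k ∈ Finset.univ.erase i, dl k (f k)) * ∑ τ, ψ (f i) τ * C (f i) τ := by
      intro f
      have e := sum_pi_erase i df (fun k _ => dflt_sum _) (fun τ => ψ (f i) τ * C (f i) τ)
      rw [← e, Finset.mul_sum]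
      exact Finset.sum_congr rfl fun g _ => by ring
    show (∑ π1 : Fin (n + 1) × (∀ k, LS (ch k)), ∑ π2 : ∀ k, FS (ch k),
        (if π1.1 = i then ψ (π1.2 i) (π2 i) *
          ((∏ k ∈ Finset.univ.erase i, dl k (π1.2 k)) *
            (∏ k ∈ Finset.univ.erase i, df k (π2 k))) else 0) * C (π1.2 i) (π2 i))
        = ∑ σ, ∑ τ, ψ σ τ * C σ τ
    rw [Fintype.sum_prod_type]
    rw [Finset.sum_eq_single i]
    · have red : ∀ f : ∀ k, LS (ch k), ∀ g : ∀ k, FS (ch k),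
          ((if ((i, f) : Fin (n + 1) × (∀ k, LS (ch k))).1 = i then ψ (f i) (g i) *
            ((∏ k ∈ Finset.univ.erase i, dl k (f k)) *
              (∏ k ∈ Finset.univ.erase i, df k (g k))) else 0) * C (f i) (g i))
            = (ψ (f i) (g i) * ((∏ k ∈ Finset.univ.erase i, dl k (f k)) *
              (∏ k ∈ Finset.univ.erase i, df k (g k)))) * C (f i) (g i) := by
        intro f g
        simp
      rw [Finset.sum_congr rfl fun f _ => Finset.sum_congr rfl fun g _ => red f g]
      rw [Finset.sum_congr rfl fun f _ => inner f]
      exact sum_pi_erase i dl (fun k _ => dflt_sum _) (fun σ => ∑ τ, ψ σ τ * C σ τ)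
    · intro x _ hx
      refine Finset.sum_eq_zero fun f _ => Finset.sum_eq_zero fun g _ => ?_
      simp [hx]
    · simp
  have hmass : (∑ π1 : LS (.leader n ch), ∑ π2 : FS (.leader n ch), Φ π1 π2) = 1 := by
    have := key (fun _ _ => 1)
    simpa [mul_one, hψ1] using this
  have hEUs : (EU (.leader n ch) Φ).2 = (EU (ch i) ψ).2 := by
    rw [EU_snd, EU_snd, ← key (fun σ τ => (playU (ch i) σ τ).2)]
    refine Finset.sum_congr rfl fun π1 _ => Finset.sum_congr rfl fun π2 _ => ?_
    by_cases h : π1.1 = i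
    · cases h
      rfl
    · simp [hΦ, h]
  have hEUf : (EU (.leader n ch) Φ).1 = (EU (ch i) ψ).1 := by
    rw [EU_fst, EU_fst, ← key (fun σ τ => (playU (ch i) σ τ).1)]
    refine Finset.sum_congr rfl fun π1 _ => Finset.sum_congr rfl fun π2 _ => ?_
    by_cases h : π1.1 = i
    · cases h
      rfl
    · simp [hΦ, h]
  have hIC : IC (.leader n ch) Φ := by
    rw [IC_leader]
    intro i'
    by_cases hi : i' = i
    · subst hi
      refine IC_of_eq (fun σ τ => ?_) hψIC
      have e := key (fun σ' τ' => if σ' = σ ∧ τ' = τ then (1:ℝ) else 0)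
      have e2 : condL Φ i' σ τ = ∑ π1 : LS (.leader n ch), ∑ π2 : FS (.leader n ch),
          Φ π1 π2 * (if π1.2 i' = σ ∧ π2 i' = τ then (1:ℝ) else 0) := by
        rw [condL]
        refine Finset.sum_congr rfl fun π1 _ => Finset.sum_congr rfl fun π2 _ => ?_
        by_cases h1 : π1.1 = i'
        · by_cases h2 : π1.2 i' = σ ∧ π2 i' = τ
          · simp [h1, h2]
          · simp only [hΦ]
            simp [h1, h2]
        · simp only [hΦ]
          simp [h1]
      have e3 : (∑ σ' : LS (ch i'), ∑ τ' : FS (ch i'),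
          ψ σ' τ' * (if σ' = σ ∧ τ' = τ then (1:ℝ) else 0)) = ψ σ τ := by
        have inner3 : ∀ σ' : LS (ch i'),
            (∑ τ' : FS (ch i'), ψ σ' τ' * (if σ' = σ ∧ τ' = τ then (1:ℝ) else 0))
              = if σ' = σ then ψ σ' τ else 0 := by
          intro σ'
          by_cases h : σ' = σ
          · simp [h, mul_ite]
          · simp [h]
        rw [Finset.sum_congr rfl fun σ' _ => inner3 σ']
        simp
      exact ((e2.trans e).trans e3).symm
    · refine IC_of_eq (fun σ τ => ?_) (IC_zero (ch i'))
      show (0 : ℝ) = condL Φ i' σ τ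
      rw [condL]
      symm
      refine Finset.sum_eq_zero fun π1 _ => Finset.sum_eq_zero fun π2 _ => ?_
      split
      · next h =>
          simp only [hΦ]
          rw [if_neg (by rw [h.1]; exact hi)]
      · rfl
  refine ⟨Φ, ⟨hΦ0, hmass⟩, hIC, ?_⟩
  rw [hEUs, hEUf]

lemma embed_follower {n : ℕ} {ch : Fin (n + 1) → TBT} (hnc : NoChance (.follower n ch))
    (b : Fin (n + 1)) (q : ℝ × ℝ) (hq : q ∈ AchievableSet (ch b))
    (hpunq : ∀ j, j ≠ b → ∃ ρ : LS (ch j) → ℝ, (∀ σ, 0 ≤ ρ σ) ∧ (∑ σ, ρ σ) = 1 ∧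
      ∀ τ'' : FS (ch j), (∑ σ, ρ σ * (playU (ch j) σ τ'').2) ≤ q.1) :
    q ∈ AchievableSet (.follower n ch) := by
  have hnc' : ∀ k, NoChance (ch k) := hnc
  obtain ⟨ψ, ⟨hψ0, hψ1⟩, hψIC, rfl⟩ := hq
  have hch : ∀ j, ∃ ρ : LS (ch j) → ℝ, (∀ σ, 0 ≤ ρ σ) ∧ (∑ σ, ρ σ) = 1 ∧
      (j ≠ b → ∀ τ'' : FS (ch j),
        (∑ σ, ρ σ * (playU (ch j) σ τ'').2) ≤ (EU (ch b) ψ).2) := by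
    intro j
    by_cases hj : j = b
    · exact ⟨dflt _, dflt_nonneg _, dflt_sum _, fun h => absurd hj h⟩
    · obtain ⟨ρ, ha, hb1, hv⟩ := hpunq j hj
      exact ⟨ρ, ha, hb1, fun _ => hv⟩
  choose ρs h0 h1 hval using hch
  set df : ∀ k, FS (ch k) → ℝ := fun k => dflt (FS (ch k)) with hdf
  set Φ : LS (.follower n ch) → FS (.follower n ch) → ℝ := fun π1 π2 =>
    if π2.1 = b then ψ (π1 b) (π2.2 b) *
      ((∏ k ∈ Finset.univ.erase b, ρs k (π1 k)) *
        (∏ k ∈ Finset.univ.erase b, df k (π2.2 k)))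
    else 0 with hΦ
  have hΦ0 : ∀ π1 π2, 0 ≤ Φ π1 π2 := by
    intro π1 π2
    simp only [hΦ]
    split
    · exact mul_nonneg (hψ0 _ _) (mul_nonneg
        (Finset.prod_nonneg fun k _ => h0 k _)
        (Finset.prod_nonneg fun k _ => dflt_nonneg _ _))
    · exact le_rfl
  -- inner sum over the follower component
  have innerF : ∀ (π1 : ∀ k, LS (ch k)) (C : LS (ch b) → FS (ch b) → ℝ),
      (∑ π2 : FS (.follower n ch), Φ π1 π2 * C (π1 b) (π2.2 b))
        = (∏ k ∈ Finset.univ.erase b, ρs k (π1 k)) * ∑ τ, ψ (π1 b) τ * C (π1 b) τ := by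
    intro π1 C
    show (∑ π2 : Fin (n + 1) × (∀ k, FS (ch k)), Φ π1 π2 * C (π1 b) (π2.2 b)) = _
    rw [Fintype.sum_prod_type]
    rw [Finset.sum_eq_single b]
    · have red : ∀ g : ∀ k, FS (ch k),
          Φ π1 (b, g) * C (π1 b) (g b)
            = (∏ k ∈ Finset.univ.erase b, df k (g k)) *
                (ψ (π1 b) (g b) * C (π1 b) (g b) * (∏ k ∈ Finset.univ.erase b, ρs k (π1 k))) := by
        intro g
        simp only [hΦ]
        simp only [if_true]
        ring
      rw [Finset.sum_congr rfl fun g _ => red g]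
      have e := sum_pi_erase b df (fun k _ => dflt_sum _)
        (fun τ => ψ (π1 b) τ * C (π1 b) τ * (∏ k ∈ Finset.univ.erase b, ρs k (π1 k)))
      rw [e, Finset.mul_sum]
      exact Finset.sum_congr rfl fun τ _ => by ring
    · intro b0 _ hb0
      refine Finset.sum_eq_zero fun g _ => ?_
      simp [hΦ, hb0]
    · simp
  have key1 : ∀ C : LS (ch b) → FS (ch b) → ℝ,
      (∑ π1 : LS (.follower n ch), ∑ π2 : FS (.follower n ch), Φ π1 π2 * C (π1 b) (π2.2 b))
        = ∑ σ, ∑ τ, ψ σ τ * C σ τ := by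
    intro C
    show (∑ π1 : ∀ k, LS (ch k), ∑ π2 : FS (.follower n ch), Φ π1 π2 * C (π1 b) (π2.2 b)) = _
    rw [Finset.sum_congr rfl fun π1 _ => innerF π1 C]
    exact sum_pi_erase b ρs (fun k hk => h1 k) (fun σ => ∑ τ, ψ σ τ * C σ τ)
  have key2 : ∀ (j : Fin (n + 1)), j ≠ b → ∀ D : LS (ch j) → ℝ,
      (∑ π1 : LS (.follower n ch), ∑ π2 : FS (.follower n ch), Φ π1 π2 * D (π1 j))
        = ∑ σ', ρs j σ' * D σ' := by
    intro j hj D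
    have innerF2 : ∀ π1 : ∀ k, LS (ch k),
        (∑ π2 : FS (.follower n ch), Φ π1 π2 * D (π1 j))
          = (∏ k ∈ Finset.univ.erase b, ρs k (π1 k)) *
              ((∑ τ, ψ (π1 b) τ) * D (π1 j)) := by
      intro π1
      have e := innerF π1 (fun _ _ => D (π1 j))
      rw [e, ← Finset.sum_mul]
    show (∑ π1 : ∀ k, LS (ch k), ∑ π2 : FS (.follower n ch), Φ π1 π2 * D (π1 j)) = _
    rw [Finset.sum_congr rfl fun π1 _ => innerF2 π1]
    have e := sum_pi_erase_two b j hj ρs (fun k _ hk2 => h1 k)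
      (fun σ => ∑ τ, ψ σ τ) D
    rw [e, hψ1, one_mul]
  have hmass : (∑ π1 : LS (.follower n ch), ∑ π2 : FS (.follower n ch), Φ π1 π2) = 1 := by
    have := key1 (fun _ _ => 1)
    simpa [mul_one, hψ1] using this
  have hEUs : (EU (.follower n ch) Φ).2 = (EU (ch b) ψ).2 := by
    rw [EU_snd, EU_snd, ← key1 (fun σ τ => (playU (ch b) σ τ).2)]
    refine Finset.sum_congr rfl fun π1 _ => Finset.sum_congr rfl fun π2 _ => ?_
    by_cases h : π2.1 = b
    · cases h
      rfl
    · simp [hΦ, h]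
  have hEUf : (EU (.follower n ch) Φ).1 = (EU (ch b) ψ).1 := by
    rw [EU_fst, EU_fst, ← key1 (fun σ τ => (playU (ch b) σ τ).1)]
    refine Finset.sum_congr rfl fun π1 _ => Finset.sum_congr rfl fun π2 _ => ?_
    by_cases h : π2.1 = b
    · cases h
      rfl
    · simp [hΦ, h]
  have hIC : IC (.follower n ch) Φ := by
    rw [IC_follower]
    constructor
    · intro b0 b' τ''
      by_cases hb0 : b0 = b
      · subst hb0
        have redL : ∀ π1 π2, (if π2.1 = b0 then Φ π1 π2 * (playU (ch b') (π1 b') τ'').2 else 0)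
            = Φ π1 π2 * (playU (ch b') (π1 b') τ'').2 := by
          intro π1 π2
          by_cases h : π2.1 = b0
          · rw [if_pos h]
          · rw [if_neg h]
            have : Φ π1 π2 = 0 := by simp [hΦ, h]
            rw [this, zero_mul]
        have redR : ∀ π1 π2, (if π2.1 = b0 then Φ π1 π2 * (playU (ch b0) (π1 b0) (π2.2 b0)).2 else 0)
            = Φ π1 π2 * (playU (ch b0) (π1 b0) (π2.2 b0)).2 := by
          intro π1 π2
          by_cases h : π2.1 = b0
          · rw [if_pos h]
          · rw [if_neg h]
            have : Φ π1 π2 = 0 := by simp [hΦ, h]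
            rw [this, zero_mul]
        rw [Finset.sum_congr rfl fun π1 _ => Finset.sum_congr rfl fun π2 _ => redL π1 π2,
          Finset.sum_congr rfl fun π1 _ => Finset.sum_congr rfl fun π2 _ => redR π1 π2]
        rw [key1 (fun σ τ => (playU (ch b0) σ τ).2)]
        by_cases hb' : b' = b0
        · subst hb'
          rw [key1 (fun σ _ => (playU (ch b') σ τ'').2)]
          exact IC_obed (ch b') (hnc' b') ψ hψ0 hψIC τ''
        · rw [key2 b' hb' (fun σ' => (playU (ch b') σ' τ'').2)]
          have := hval b' hb' τ''
          rw [EU_snd] at this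
          exact this
      · have redL : ∀ π1 π2,
            (if π2.1 = b0 then Φ π1 π2 * (playU (ch b') (π1 b') τ'').2 else 0) = 0 := by
          intro π1 π2
          by_cases h : π2.1 = b0
          · rw [if_pos h]
            have : Φ π1 π2 = 0 := by
              have : ¬ (π2.1 = b) := by rw [h]; exact hb0
              simp [hΦ, this]
            rw [this, zero_mul]
          · rw [if_neg h]
        have redR : ∀ π1 π2,
            (if π2.1 = b0 then Φ π1 π2 * (playU (ch b0) (π1 b0) (π2.2 b0)).2 else 0) = 0 := by
          intro π1 π2
          by_cases h : π2.1 = b0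
          · rw [if_pos h]
            have : Φ π1 π2 = 0 := by
              have : ¬ (π2.1 = b) := by rw [h]; exact hb0
              simp [hΦ, this]
            rw [this, zero_mul]
          · rw [if_neg h]
        rw [Finset.sum_congr rfl fun π1 _ => Finset.sum_congr rfl fun π2 _ => redL π1 π2,
          Finset.sum_congr rfl fun π1 _ => Finset.sum_congr rfl fun π2 _ => redR π1 π2]
    · intro b0
      by_cases hb0 : b0 = b
      · subst hb0
        refine IC_of_eq (fun σ τ => ?_) hψIC
        have e := key1 (fun σ' τ' => if σ' = σ ∧ τ' = τ then (1:ℝ) else 0)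
        have e2 : condF Φ b0 σ τ = ∑ π1 : LS (.follower n ch), ∑ π2 : FS (.follower n ch),
            Φ π1 π2 * (if π1 b0 = σ ∧ π2.2 b0 = τ then (1:ℝ) else 0) := by
          rw [condF]
          refine Finset.sum_congr rfl fun π1 _ => Finset.sum_congr rfl fun π2 _ => ?_
          by_cases h1 : π2.1 = b0
          · by_cases h2 : π1 b0 = σ ∧ π2.2 b0 = τ
            · simp [h1, h2]
            · simp only [hΦ]
              simp [h1, h2]
          · simp only [hΦ]
            simp [h1]
        have e3 : (∑ σ' : LS (ch b0), ∑ τ' : FS (ch b0),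
            ψ σ' τ' * (if σ' = σ ∧ τ' = τ then (1:ℝ) else 0)) = ψ σ τ := by
          have inner3 : ∀ σ' : LS (ch b0),
              (∑ τ' : FS (ch b0), ψ σ' τ' * (if σ' = σ ∧ τ' = τ then (1:ℝ) else 0))
                = if σ' = σ then ψ σ' τ else 0 := by
            intro σ'
            by_cases h : σ' = σ
            · simp [h, mul_ite]
            · simp [h]
          rw [Finset.sum_congr rfl fun σ' _ => inner3 σ']
          simp
        exact ((e2.trans e).trans e3).symm
      · refine IC_of_eq (fun σ τ => ?_) (IC_zero (ch b0))
        show (0 : ℝ) = condF Φ b0 σ τ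
        rw [condF]
        symm
        refine Finset.sum_eq_zero fun π1 _ => Finset.sum_eq_zero fun π2 _ => ?_
        split
        · next h =>
            have : ¬ (π2.1 = b) := by rw [h.1]; exact hb0
            simp [hΦ, this]
        · rfl
  refine ⟨Φ, ⟨hΦ0, hmass⟩, hIC, ?_⟩
  rw [hEUs, hEUf]
/-- For a finite turn-based game tree with no chance nodes, the
recursively defined set `H_s` of every node `s` (here: the root of every subgame, the sets
`H` depending only on the subtree rooted at the node) equals the set of pairs
(follower expected utility, leader expected utility) achievable by incentive-compatible
correlated commitments in the subgame rooted at `s`. -/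
theorem Hset_eq_achievable (t : TBT) (hnc : NoChance t) :
    Hset t = AchievableSet t := by
  revert hnc
  induction t with
  | leaf u1 u2 =>
    intro hnc
    ext p
    show p ∈ ({((u2 : ℝ), (u1 : ℝ))} : Set (ℝ × ℝ)) ↔ _
    simp only [Set.mem_singleton_iff]
    constructor
    · rintro rfl
      refine ⟨fun _ _ => 1, ⟨fun _ _ => zero_le_one, ?_⟩, trivial, ?_⟩
      · show (∑ _ : PUnit, ∑ _ : PUnit, (1:ℝ)) = 1
        simp
      · have e : EU (.leaf u1 u2) (fun _ _ => 1) = (u1, u2) := by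
          show (∑ _ : PUnit, ∑ _ : PUnit, (1:ℝ) • ((u1, u2) : ℝ × ℝ)) = (u1, u2)
          simp
        rw [e]
    · rintro ⟨φ, ⟨hφ0, hφ1⟩, -, rfl⟩
      have e : EU (.leaf u1 u2) φ = (u1, u2) := by
        have e2 : EU (.leaf u1 u2) φ
            = (∑ π1 : LS (.leaf u1 u2), ∑ π2 : FS (.leaf u1 u2), φ π1 π2) • ((u1, u2) : ℝ × ℝ) := by
          rw [EU, Finset.sum_smul]
          refine Finset.sum_congr rfl fun π1 _ => ?_
          rw [Finset.sum_smul]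
          rfl
        rw [e2, hφ1, one_smul]
      rw [e]
  | leader n ch IH =>
    intro hnc
    have hnc' : ∀ i, NoChance (ch i) := hnc
    have hIH : ∀ i, Hset (ch i) = AchievableSet (ch i) := fun i => IH i (hnc' i)
    have hHs : Hset (.leader n ch) = convexHull ℝ (⋃ i, AchievableSet (ch i)) := by
      show convexHull ℝ (⋃ i, Hset (ch i)) = _
      simp only [hIH]
    rw [hHs]
    refine Set.Subset.antisymm ?_ ?_
    · refine convexHull_min ?_ (achievable_convex _)
      intro p hp
      obtain ⟨i, hpi⟩ := Set.mem_iUnion.1 hp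
      exact embed_leader i p hpi
    · rintro p ⟨φ, ⟨hφ0, hφ1⟩, hICφ, rfl⟩
      set lam : Fin (n + 1) → ℝ := fun i => ∑ σ, ∑ τ, condL φ i σ τ with hlam
      set ψ : ∀ i, LS (ch i) → FS (ch i) → ℝ :=
        fun i σ τ => (∑ σ', ∑ τ', condL φ i σ' τ')⁻¹ * condL φ i σ τ with hψ
      set qq : Fin (n + 1) → ℝ × ℝ :=
        fun i => ((EU (ch i) (ψ i)).2, (EU (ch i) (ψ i)).1) with hqq
      set s : Finset (Fin (n + 1)) := Finset.univ.filter (fun i => lam i ≠ 0) with hses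
      have hlam0 : ∀ i, 0 ≤ lam i := fun i =>
        Finset.sum_nonneg fun σ _ => Finset.sum_nonneg fun τ' _ => condL_nonneg hφ0 i σ τ'
      have hwsum : (∑ i ∈ s, lam i) = 1 := by
        rw [hses, Finset.sum_filter_ne_zero, hlam]
        rw [condL_mass φ, hφ1]
      have hmem : ∀ i ∈ s, qq i ∈ convexHull ℝ (⋃ j, AchievableSet (ch j)) := by
        intro i hi
        have hne : lam i ≠ 0 := (Finset.mem_filter.1 hi).2
        obtain ⟨hdist, hICn⟩ := norm_dist_IC (condL φ i) (condL_nonneg hφ0 i) (hICφ i) hne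
        refine subset_convexHull ℝ _ (Set.mem_iUnion.2 ⟨i, ?_⟩)
        exact ⟨ψ i, hdist, hICn, rfl⟩
      have comp : ∀ (u : ∀ i, LS (ch i) → FS (ch i) → ℝ),
          (∑ i ∈ s, lam i * (∑ σ, ∑ τ, ψ i σ τ * u i σ τ))
            = ∑ π1 : LS (.leader n ch), ∑ π2 : FS (.leader n ch),
                φ π1 π2 * u π1.1 (π1.2 π1.1) (π2 π1.1) := by
        intro u
        rw [← condL_sum φ u]
        rw [← Finset.sum_filter_ne_zero Finset.univ (f := fun i => ∑ σ, ∑ τ, condL φ i σ τ * u i σ τ)]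
        have hsub : Finset.univ.filter
            (fun i => (∑ σ, ∑ τ, condL φ i σ τ * u i σ τ) ≠ 0) ⊆ s := by
          intro i hi
          rw [hses, Finset.mem_filter]
          refine ⟨Finset.mem_univ i, fun h0 => ?_⟩
          exact (Finset.mem_filter.1 hi).2 (sum_zero_of_mass_zero (condL φ i)
            (condL_nonneg hφ0 i) h0 (u i))
        rw [Finset.sum_subset hsub]
        · refine Finset.sum_congr rfl fun i hi => ?_
          have hne : lam i ≠ 0 := (Finset.mem_filter.1 hi).2
          have e : (∑ σ, ∑ τ, ψ i σ τ * u i σ τ)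
              = (lam i)⁻¹ * ∑ σ, ∑ τ, condL φ i σ τ * u i σ τ := by
            rw [Finset.mul_sum]
            refine Finset.sum_congr rfl fun σ _ => ?_
            rw [Finset.mul_sum]
            refine Finset.sum_congr rfl fun τ _ => ?_
            rw [hψ]
            ring
          rw [e, ← mul_assoc, mul_inv_cancel₀ hne, one_mul]
        · intro i _ hi
          by_contra hcon
          exact hi (Finset.mem_filter.2 ⟨Finset.mem_univ i, hcon⟩)
      have hpt : ((EU (.leader n ch) φ).2, (EU (.leader n ch) φ).1) = ∑ i ∈ s, lam i • qq i := by
        have c2 := comp (fun i σ τ => (playU (ch i) σ τ).2)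
        have c1 := comp (fun i σ τ => (playU (ch i) σ τ).1)
        have e2 : (EU (.leader n ch) φ).2 = ∑ π1 : LS (.leader n ch), ∑ π2 : FS (.leader n ch),
            φ π1 π2 * (playU (ch π1.1) (π1.2 π1.1) (π2 π1.1)).2 := EU_snd _ φ
        have e1 : (EU (.leader n ch) φ).1 = ∑ π1 : LS (.leader n ch), ∑ π2 : FS (.leader n ch),
            φ π1 π2 * (playU (ch π1.1) (π1.2 π1.1) (π2 π1.1)).1 := EU_fst _ φ
        refine Prod.ext ?_ ?_
        · show (EU (.leader n ch) φ).2 = (∑ i ∈ s, lam i • qq i).1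
          rw [Prod.fst_sum, e2, ← c2]
          refine Finset.sum_congr rfl fun i _ => ?_
          rw [Prod.smul_fst, smul_eq_mul]
          congr 1
          exact (EU_snd (ch i) (ψ i)).symm
        · show (EU (.leader n ch) φ).1 = (∑ i ∈ s, lam i • qq i).2
          rw [Prod.snd_sum, e1, ← c1]
          refine Finset.sum_congr rfl fun i _ => ?_
          rw [Prod.smul_snd, smul_eq_mul]
          congr 1
          exact (EU_fst (ch i) (ψ i)).symm
      rw [hpt]
      exact (convex_convexHull ℝ _).sum_mem (fun i _ => hlam0 i) hwsum hmem
  | follower n ch IH =>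
    intro hnc
    have hnc' : ∀ i, NoChance (ch i) := hnc
    have hIH : ∀ i, Hset (ch i) = AchievableSet (ch i) := fun i => IH i (hnc' i)
    have hHs : Hset (.follower n ch) = convexHull ℝ (⋃ i,
        {p ∈ AchievableSet (ch i) |
          ∀ j, j ≠ i → sInf (Prod.fst '' AchievableSet (ch j)) ≤ p.1}) := by
      show convexHull ℝ (⋃ i, {p ∈ Hset (ch i) |
        ∀ j, j ≠ i → sInf (Prod.fst '' Hset (ch j)) ≤ p.1}) = _
      simp only [hIH]
    rw [hHs]
    refine Set.Subset.antisymm ?_ ?_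
    · refine convexHull_min ?_ (achievable_convex _)
      intro p hp
      obtain ⟨i, hpi⟩ := Set.mem_iUnion.1 hp
      refine embed_follower hnc i p hpi.1 ?_
      intro j hj
      obtain ⟨ρ, h0, h1, hpun⟩ := exists_punish (ch j) (hnc' j)
      refine ⟨ρ, h0, h1, fun τ'' => ?_⟩
      refine le_trans ?_ (hpi.2 j hj)
      refine le_csInf ((achievable_nonempty (ch j) (hnc' j)).image Prod.fst) ?_
      rintro x ⟨pq, hpq, rfl⟩
      obtain ⟨φ', hdist', hIC', rfl⟩ := hpq
      exact hpun φ' hdist' hIC' τ''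
    · rintro p ⟨φ, ⟨hφ0, hφ1⟩, hICφ, rfl⟩
      set lam : Fin (n + 1) → ℝ := fun b => ∑ σ, ∑ τ, condF φ b σ τ with hlam
      set ψ : ∀ b, LS (ch b) → FS (ch b) → ℝ :=
        fun b σ τ => (∑ σ', ∑ τ', condF φ b σ' τ')⁻¹ * condF φ b σ τ with hψ
      set qq : Fin (n + 1) → ℝ × ℝ :=
        fun b => ((EU (ch b) (ψ b)).2, (EU (ch b) (ψ b)).1) with hqq
      set s : Finset (Fin (n + 1)) := Finset.univ.filter (fun b => lam b ≠ 0) with hses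
      have hlam0 : ∀ b, 0 ≤ lam b := fun b =>
        Finset.sum_nonneg fun σ _ => Finset.sum_nonneg fun τ' _ => condF_nonneg hφ0 b σ τ'
      have hwsum : (∑ b ∈ s, lam b) = 1 := by
        rw [hses, Finset.sum_filter_ne_zero, hlam]
        rw [condF_mass φ, hφ1]
      have hmem : ∀ b ∈ s, qq b ∈ convexHull ℝ (⋃ i,
          {p ∈ AchievableSet (ch i) |
            ∀ j, j ≠ i → sInf (Prod.fst '' AchievableSet (ch j)) ≤ p.1}) := by
        intro b hb
        have hne : lam b ≠ 0 := (Finset.mem_filter.1 hb).2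
        have hpos : 0 < lam b := lt_of_le_of_ne (hlam0 b) (Ne.symm hne)
        obtain ⟨hdist, hICn⟩ := norm_dist_IC (condF φ b) (condF_nonneg hφ0 b) (hICφ.2 b) hne
        refine subset_convexHull ℝ _ (Set.mem_iUnion.2 ⟨b, ⟨⟨ψ b, hdist, hICn, rfl⟩, ?_⟩⟩)
        intro j hj
        set rho : LS (ch j) → ℝ := fun σ' => (lam b)⁻¹ * margF φ b j σ' with hrho
        have hrho0 : ∀ σ', 0 ≤ rho σ' := fun σ' =>
          mul_nonneg (inv_nonneg.2 (hlam0 b)) (margF_nonneg hφ0 b j σ')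
        have hrho1 : (∑ σ', rho σ') = 1 := by
          rw [hrho, ← Finset.mul_sum, margF_mass φ b j]
          exact inv_mul_cancel₀ hne
        obtain ⟨τstar, hICstar, -⟩ := exists_br (ch j) (hnc' j) rho hrho0
        have hdist' := delta_isDist (ch j) rho hrho0 hrho1 τstar
        have hsInf : sInf (Prod.fst '' AchievableSet (ch j))
            ≤ (EU (ch j) (fun σ' τ'' => if τ'' = τstar then rho σ' else 0)).2 :=
          csInf_le (achievable_bddBelow _)
            ⟨_, ⟨_, hdist', hICstar, rfl⟩, rfl⟩
        have hx' : (EU (ch j) (fun σ' τ'' => if τ'' = τstar then rho σ' else 0)).2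
            = ∑ σ', rho σ' * (playU (ch j) σ' τstar).2 := EU_delta_snd _ _ _
        have hb1 : lam b * (∑ σ', rho σ' * (playU (ch j) σ' τstar).2)
            = ∑ σ', margF φ b j σ' * (playU (ch j) σ' τstar).2 := by
          rw [Finset.mul_sum]
          refine Finset.sum_congr rfl fun σ' _ => ?_
          rw [hrho]
          dsimp only
          have harr : ∀ x y : ℝ, lam b * ((lam b)⁻¹ * x * y) = x * y := fun x y => by
            rw [← mul_assoc, ← mul_assoc, mul_inv_cancel₀ hne, one_mul]
          exact harr (margF φ b j σ') _
        have hb2 : (∑ σ', margF φ b j σ' * (playU (ch j) σ' τstar).2)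
            ≤ ∑ σ, ∑ τ, condF φ b σ τ * (playU (ch b) σ τ).2 := by
          rw [margF_sum φ b j (fun σ' => (playU (ch j) σ' τstar).2)]
          exact le_trans (hICφ.1 b j τstar)
            (le_of_eq (condF_sum_single φ b (fun σ' τ'' => (playU (ch b) σ' τ'').2)).symm)
        have hb3 : (∑ σ, ∑ τ, condF φ b σ τ * (playU (ch b) σ τ).2)
            = lam b * (EU (ch b) (ψ b)).2 := by
          have e : (EU (ch b) (ψ b)).2
              = (lam b)⁻¹ * ∑ σ, ∑ τ, condF φ b σ τ * (playU (ch b) σ τ).2 := by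
            rw [hψ]
            rw [EU_smul, Prod.smul_snd, smul_eq_mul, EU_snd]
          rw [e, ← mul_assoc, mul_inv_cancel₀ hne, one_mul]
        have hxle : (∑ σ', rho σ' * (playU (ch j) σ' τstar).2) ≤ (EU (ch b) (ψ b)).2 := by
          have := le_trans (le_of_eq hb1) (le_trans hb2 (le_of_eq hb3))
          exact (mul_le_mul_iff_right₀ hpos).1 this
        show sInf (Prod.fst '' AchievableSet (ch j)) ≤ (EU (ch b) (ψ b)).2
        exact le_trans hsInf (le_trans (le_of_eq hx') hxle)
      have comp : ∀ (u : ∀ b, LS (ch b) → FS (ch b) → ℝ),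
          (∑ b ∈ s, lam b * (∑ σ, ∑ τ, ψ b σ τ * u b σ τ))
            = ∑ π1 : LS (.follower n ch), ∑ π2 : FS (.follower n ch),
                φ π1 π2 * u π2.1 (π1 π2.1) (π2.2 π2.1) := by
        intro u
        rw [← condF_sum φ u]
        rw [← Finset.sum_filter_ne_zero Finset.univ
          (f := fun b => ∑ σ, ∑ τ, condF φ b σ τ * u b σ τ)]
        have hsub : Finset.univ.filter
            (fun b => (∑ σ, ∑ τ, condF φ b σ τ * u b σ τ) ≠ 0) ⊆ s := by
          intro b hb
          rw [hses, Finset.mem_filter]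
          refine ⟨Finset.mem_univ b, fun h0 => ?_⟩
          exact (Finset.mem_filter.1 hb).2 (sum_zero_of_mass_zero (condF φ b)
            (condF_nonneg hφ0 b) h0 (u b))
        rw [Finset.sum_subset hsub]
        · refine Finset.sum_congr rfl fun b hb => ?_
          have hne : lam b ≠ 0 := (Finset.mem_filter.1 hb).2
          have e : (∑ σ, ∑ τ, ψ b σ τ * u b σ τ)
              = (lam b)⁻¹ * ∑ σ, ∑ τ, condF φ b σ τ * u b σ τ := by
            rw [Finset.mul_sum]
            refine Finset.sum_congr rfl fun σ _ => ?_
            rw [Finset.mul_sum]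
            refine Finset.sum_congr rfl fun τ _ => ?_
            rw [hψ]
            ring
          rw [e, ← mul_assoc, mul_inv_cancel₀ hne, one_mul]
        · intro b _ hb
          by_contra hcon
          exact hb (Finset.mem_filter.2 ⟨Finset.mem_univ b, hcon⟩)
      have c2 := comp (fun b σ τ => (playU (ch b) σ τ).2)
      have c1 := comp (fun b σ τ => (playU (ch b) σ τ).1)
      have e2 : (EU (.follower n ch) φ).2 = ∑ π1 : LS (.follower n ch),
          ∑ π2 : FS (.follower n ch),
          φ π1 π2 * (playU (ch π2.1) (π1 π2.1) (π2.2 π2.1)).2 := EU_snd _ φ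
      have e1 : (EU (.follower n ch) φ).1 = ∑ π1 : LS (.follower n ch),
          ∑ π2 : FS (.follower n ch),
          φ π1 π2 * (playU (ch π2.1) (π1 π2.1) (π2.2 π2.1)).1 := EU_fst _ φ
      have hpt : ((EU (.follower n ch) φ).2, (EU (.follower n ch) φ).1)
          = ∑ b ∈ s, lam b • qq b := by
        refine Prod.ext ?_ ?_
        · show (EU (.follower n ch) φ).2 = (∑ b ∈ s, lam b • qq b).1
          rw [Prod.fst_sum, e2, ← c2]
          refine Finset.sum_congr rfl fun b _ => ?_
          rw [Prod.smul_fst, smul_eq_mul]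
          congr 1
          exact (EU_snd (ch b) (ψ b)).symm
        · show (EU (.follower n ch) φ).1 = (∑ b ∈ s, lam b • qq b).2
          rw [Prod.snd_sum, e1, ← c1]
          refine Finset.sum_congr rfl fun b _ => ?_
          rw [Prod.smul_snd, smul_eq_mul]
          congr 1
          exact (EU_fst (ch b) (ψ b)).symm
      rw [hpt]
      exact (convex_convexHull ℝ _).sum_mem (fun b _ => hlam0 b) hwsum hmem
  | chance n p ch IH =>
    intro hnc
    exact False.elim hnc

end TBT
end
end
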